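/- arXiv:1907.10811 — 11 statements merged into one kernel-verified Lean document; each statement's English description precedes it below -/
import Mathlib

section
/- Let g and h be nonzero homogeneous polynomials in R = ℝ[x,y,z] such that g involves only the variables x and z, and h involves only the variables y and z. Then with respect to the lexicographic monomial order, gcd(in(g), in(h)) = in(gcd(g, h)), where in(·) denotes the leading monomial. -/
open MvPolynomial

/-- The leading monomial (exponent vector) of a polynomial in `ℝ[x,y,z]` with respect to
the lexicographic order `x > y > z` (variables indexed `0 > 1 > 2` via `Fin 3`). -/
noncomputable def leadMon (p : MvPolynomial (Fin 3) ℝ) : Fin 3 →₀ ℕ :=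
  if h : p = 0 then 0
  else ofLex ((p.support.image (toLex : (Fin 3 →₀ ℕ) → Lex (Fin 3 →₀ ℕ))).max'
    (by
      rw [Finset.image_nonempty]
      exact MvPolynomial.support_nonempty.mpr h))

private lemma leadMon_mem {p : MvPolynomial (Fin 3) ℝ} (hp : p ≠ 0) :
    leadMon p ∈ p.support := by
  rw [leadMon, dif_neg hp]
  have h := (p.support.image (toLex : (Fin 3 →₀ ℕ) → Lex (Fin 3 →₀ ℕ))).max'_mem
    (by rw [Finset.image_nonempty]; exact MvPolynomial.support_nonempty.mpr hp)
  obtain ⟨e, he, hee⟩ := Finset.mem_image.1 h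
  rw [← hee]
  exact he

private lemma le_leadMon {p : MvPolynomial (Fin 3) ℝ} (hp : p ≠ 0)
    {e : Fin 3 →₀ ℕ} (he : e ∈ p.support) : toLex e ≤ toLex (leadMon p) := by
  rw [leadMon, dif_neg hp]
  exact Finset.le_max' _ (toLex e) (Finset.mem_image_of_mem _ he)

private lemma leadMon_eq_sup {p : MvPolynomial (Fin 3) ℝ} (hp : p ≠ 0) :
    toLex (leadMon p) = AddMonoidAlgebra.supDegree (toLex : (Fin 3 →₀ ℕ) → Lex _) p := by
  apply le_antisymm
  · exact Finset.le_sup (leadMon_mem hp)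
  · exact Finset.sup_le fun e he => le_leadMon hp he

private lemma leadMon_mul {p q : MvPolynomial (Fin 3) ℝ} (hp : p ≠ 0) (hq : q ≠ 0) :
    leadMon (p * q) = leadMon p + leadMon q := by
  have hD : Function.Injective (toLex : (Fin 3 →₀ ℕ) → Lex (Fin 3 →₀ ℕ)) :=
    toLex.injective
  have hpq : p * q ≠ 0 := mul_ne_zero hp hq
  have hlc : AddMonoidAlgebra.leadingCoeff (toLex : (Fin 3 →₀ ℕ) → Lex _) p *
      AddMonoidAlgebra.leadingCoeff (toLex : (Fin 3 →₀ ℕ) → Lex _) q ≠ 0 :=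
    mul_ne_zero ((AddMonoidAlgebra.leadingCoeff_ne_zero hD).2 hp)
      ((AddMonoidAlgebra.leadingCoeff_ne_zero hD).2 hq)
  have hmul := AddMonoidAlgebra.supDegree_mul (R := ℝ)
    (D := (toLex : (Fin 3 →₀ ℕ) → Lex _)) hD (fun _ _ => rfl) hlc hp hq
  apply toLex.injective
  rw [leadMon_eq_sup hpq, hmul, ← leadMon_eq_sup hp, ← leadMon_eq_sup hq]
  rfl

private lemma leadMon_monomial (e : Fin 3 →₀ ℕ) {c : ℝ} (hc : c ≠ 0) :
    leadMon (monomial e c) = e := by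
  have h0 : (monomial e c : MvPolynomial (Fin 3) ℝ) ≠ 0 := by
    simp [MvPolynomial.monomial_eq_zero, hc]
  rw [leadMon, dif_neg h0]
  have hs : (monomial e c : MvPolynomial (Fin 3) ℝ).support = {e} := by
    simp [MvPolynomial.support_monomial, hc]
  simp only [hs, Finset.image_singleton, Finset.max'_singleton, ofLex_toLex]

private lemma pow_dvd_of_le {p : MvPolynomial (Fin 3) ℝ} {k : ℕ}
    (hk : ∀ e ∈ p.support, k ≤ e 2) : (X 2 : MvPolynomial (Fin 3) ℝ) ^ k ∣ p := by
  conv => rw [p.as_sum]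
  apply Finset.dvd_sum
  intro e he
  refine ⟨monomial (e - Finsupp.single 2 k) (coeff e p), ?_⟩
  rw [X_pow_eq_monomial, monomial_mul, one_mul]
  congr 1
  have hle : Finsupp.single 2 k ≤ e := by
    rw [Finsupp.le_iff]
    intro i hi
    rcases eq_or_ne i 2 with rfl | hi2
    · rw [Finsupp.single_eq_same]; exact hk e he
    · rw [Finsupp.single_eq_of_ne' fun h => hi2 h.symm]; exact Nat.zero_le _
  rw [add_tsub_cancel_of_le hle]

private lemma leadMon_min_z {p : MvPolynomial (Fin 3) ℝ} {m : ℕ} (hp : p ≠ 0)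
    (hpm : p.IsHomogeneous m) (h1 : ∀ e ∈ p.support, e 1 = 0) :
    ∀ e ∈ p.support, leadMon p 2 ≤ e 2 := by
  have hdeg : ∀ f ∈ p.support, f 0 + f 1 + f 2 = m := by
    intro f hf
    have := hpm (MvPolynomial.mem_support_iff.1 hf)
    simpa [Finsupp.weight_apply, Finsupp.sum_fintype, Fin.sum_univ_three] using this
  intro e he
  have hl := leadMon_mem hp
  have h01 := h1 _ hl
  have he1 := h1 _ he
  have h0 : e 0 ≤ leadMon p 0 := by
    by_contra hlt
    push_neg at hlt
    have hlex : toLex (leadMon p) < toLex e := by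
      refine ⟨0, fun d hd => ?_, hlt⟩
      exact (Nat.not_lt_zero d.1 hd).elim
    exact absurd (le_leadMon hp he) (not_le.2 hlex)
  have hde := hdeg e he
  have hdl := hdeg _ hl
  omega

private lemma leadMon_min_z' {p : MvPolynomial (Fin 3) ℝ} {m : ℕ} (hp : p ≠ 0)
    (hpm : p.IsHomogeneous m) (h0 : ∀ e ∈ p.support, e 0 = 0) :
    ∀ e ∈ p.support, leadMon p 2 ≤ e 2 := by
  have hdeg : ∀ f ∈ p.support, f 0 + f 1 + f 2 = m := by
    intro f hf
    have := hpm (MvPolynomial.mem_support_iff.1 hf)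
    simpa [Finsupp.weight_apply, Finsupp.sum_fintype, Fin.sum_univ_three] using this
  intro e he
  have hl := leadMon_mem hp
  have h00 := h0 _ hl
  have he0 := h0 _ he
  have h1 : e 1 ≤ leadMon p 1 := by
    by_contra hlt
    push_neg at hlt
    have hlex : toLex (leadMon p) < toLex e := by
      refine ⟨1, fun d hd => ?_, hlt⟩
      have hd0 : d = 0 := by omega
      show (leadMon p) d = e d
      rw [hd0, h00, he0]
    exact absurd (le_leadMon hp he) (not_le.2 hlex)
  have hde := hdeg e he
  have hdl := hdeg _ hl
  omega

/-- If `g, h` are nonzero homogeneous polynomials in `ℝ[x,y,z]`, `g` involving only `x, z`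
and `h` involving only `y, z`, then for any gcd `d` of `g` and `h` one has
`in(d) = gcd(in(g), in(h))`, the gcd of the leading monomials being their componentwise min. -/
theorem stmt_2 (g h d : MvPolynomial (Fin 3) ℝ) (hg : g ≠ 0) (hh : h ≠ 0)
    (m n : ℕ) (hgm : g.IsHomogeneous m) (hhn : h.IsHomogeneous n)
    (hgxz : ∀ e ∈ g.support, e 1 = 0) (hhyz : ∀ e ∈ h.support, e 0 = 0)
    (hdg : d ∣ g) (hdh : d ∣ h) (hdmax : ∀ e : MvPolynomial (Fin 3) ℝ, e ∣ g → e ∣ h → e ∣ d) :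
    ∀ i : Fin 3, leadMon d i = min (leadMon g i) (leadMon h i) := by
  obtain ⟨u, hu⟩ := hdg
  obtain ⟨v, hv⟩ := hdh
  have hd0 : d ≠ 0 := fun h0 => hg (by rw [hu, h0, zero_mul])
  have hu0 : u ≠ 0 := fun h0 => hg (by rw [hu, h0, mul_zero])
  have hv0 : v ≠ 0 := fun h0 => hh (by rw [hv, h0, mul_zero])
  have egm : leadMon g = leadMon d + leadMon u := by rw [hu]; exact leadMon_mul hd0 hu0
  have ehm : leadMon h = leadMon d + leadMon v := by rw [hv]; exact leadMon_mul hd0 hv0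
  have eg : ∀ i, leadMon g i = leadMon d i + leadMon u i := fun i => by
    rw [egm, Finsupp.add_apply]
  have eh : ∀ i, leadMon h i = leadMon d i + leadMon v i := fun i => by
    rw [ehm, Finsupp.add_apply]
  have hg1 : leadMon g 1 = 0 := hgxz _ (leadMon_mem hg)
  have hh0 : leadMon h 0 = 0 := hhyz _ (leadMon_mem hh)
  -- z^K divides d where K = min of z-degrees of leading monomials
  set K := min (leadMon g 2) (leadMon h 2) with hK
  have hzg : (X 2 : MvPolynomial (Fin 3) ℝ) ^ K ∣ g :=
    pow_dvd_of_le fun e he => le_trans (min_le_left _ _) (leadMon_min_z hg hgm hgxz e he)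
  have hzh : (X 2 : MvPolynomial (Fin 3) ℝ) ^ K ∣ h :=
    pow_dvd_of_le fun e he => le_trans (min_le_right _ _) (leadMon_min_z' hh hhn hhyz e he)
  obtain ⟨w, hw⟩ := hdmax _ hzg hzh
  have hX0 : (X 2 : MvPolynomial (Fin 3) ℝ) ^ K ≠ 0 := pow_ne_zero _ (X_ne_zero _)
  have hw0 : w ≠ 0 := fun h0 => hd0 (by rw [hw, h0, mul_zero])
  have edm : leadMon d = leadMon ((X 2 : MvPolynomial (Fin 3) ℝ) ^ K) + leadMon w := by
    rw [hw]; exact leadMon_mul hX0 hw0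
  have hXK : leadMon ((X 2 : MvPolynomial (Fin 3) ℝ) ^ K) = Finsupp.single 2 K := by
    rw [X_pow_eq_monomial]; exact leadMon_monomial _ one_ne_zero
  have ed2 : K ≤ leadMon d 2 := by
    have : leadMon d 2 = K + leadMon w 2 := by
      rw [edm, Finsupp.add_apply, hXK]; simp
    omega
  intro i
  fin_cases i
  · show leadMon d 0 = min (leadMon g 0) (leadMon h 0)
    have := eh 0; omega
  · show leadMon d 1 = min (leadMon g 1) (leadMon h 1)
    have := eg 1; omega
  · show leadMon d 2 = min (leadMon g 2) (leadMon h 2)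
    have h2g := eg 2
    have h2h := eh 2
    omega
end

section
/- Let c₁, …, c_s be distinct real numbers with s ≥ 2, let r ≥ 0, and let J = ⟨(x+c₁y)^{r+1}, …, (x+c_s y)^{r+1}⟩ in ℝ[x,y]. Then for every degree d with d ≥ (sr+1)/(s-1), the degree-d graded piece of J equals the full space of homogeneous polynomials of degree d, i.e. J_d = ℝ[x,y]_d. -/
section aux

open Polynomial Finset

lemma step1 (r d : ℕ) (c : ℝ) (g : ℕ → ℝ)
    (H : ∀ j, j + (r + 1) ≤ d →
      ∑ a ∈ range (r + 2), ((r + 1).choose a : ℝ) * c ^ a * g (j + a) = 0) :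
    ∀ M, r + 1 ≤ M → ∀ n, n + M ≤ d →
      ∑ m ∈ range (M + 1), (M.choose m : ℝ) * c ^ m * g (n + m) = 0 := by
  intro M hM
  induction M, hM using Nat.le_induction with
  | base => intro n hn; exact H n hn
  | succ M hM ih =>
    intro n hn
    set f : ℕ → ℝ := fun m => (M.choose m : ℝ) * c ^ m * g (n + m) with hf
    have key : ∑ i ∈ range (M + 1), f (i+1)
        = (∑ m ∈ range (M + 1), f m) + f (M+1) - f 0 := by
      have h1 := Finset.sum_range_succ' f (M+1)
      have h2 := Finset.sum_range_succ f (M+1)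
      rw [h2] at h1
      linarith [h1]
    have hfM1 : f (M+1) = 0 := by
      simp [hf, Nat.choose_succ_self]
    have ihn : ∑ m ∈ range (M + 1), f m = 0 := ih n (by omega)
    have ihn1 : ∑ i ∈ range (M + 1), (M.choose i : ℝ) * c ^ i * g ((n+1) + i) = 0 :=
      ih (n+1) (by omega)
    have h1 : ∑ m ∈ range (M + 1 + 1), ((M + 1).choose m : ℝ) * c ^ m * g (n + m)
        = ∑ i ∈ range (M + 1), ((M + 1).choose (i+1) : ℝ) * c ^ (i+1) * g (n + (i+1))
          + ((M+1).choose 0 : ℝ) * c ^ 0 * g (n + 0) :=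
      Finset.sum_range_succ' _ (M+1)
    rw [h1]
    have h3 : ∑ i ∈ range (M + 1), ((M + 1).choose (i+1) : ℝ) * c ^ (i+1) * g (n + (i+1))
        = c * (∑ i ∈ range (M + 1), (M.choose i : ℝ) * c ^ i * g ((n+1) + i))
          + ∑ i ∈ range (M + 1), f (i+1) := by
      rw [Finset.mul_sum, ← Finset.sum_add_distrib]
      apply Finset.sum_congr rfl
      intro i _
      have : (M + 1).choose (i+1) = M.choose i + M.choose (i+1) := Nat.choose_succ_succ M i
      rw [this, hf]
      have : n + 1 + i = n + (i + 1) := by omega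
      rw [this]; push_cast; ring
    rw [h3, key, ihn, ihn1, hfM1]
    simp [hf]

lemma choose_id (d n m : ℕ) (h : n + m ≤ d) :
    ((n+m).choose n : ℝ) * (d.choose (n+m)) = (d.choose n) * ((d-n).choose m) := by
  have e1 : n + m - n = m := by omega
  have e2 : d - (n+m) = d - n - m := by omega
  rw [Nat.cast_choose ℝ (Nat.le_add_right n m), Nat.cast_choose ℝ h,
    Nat.cast_choose ℝ (by omega : n ≤ d), Nat.cast_choose ℝ (by omega : m ≤ d - n), e1, e2]
  have f : ∀ k : ℕ, (Nat.factorial k : ℝ) ≠ 0 := fun k => Nat.cast_ne_zero.mpr (Nat.factorial_ne_zero k)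
  field_simp [f]

lemma heart (s r d : ℕ) (hs : 2 ≤ s) (c : Fin s → ℝ) (hc : Function.Injective c)
    (hd : s * r + 1 ≤ (s - 1) * d) (g : ℕ → ℝ)
    (H : ∀ (i : Fin s) (j : ℕ), j + (r + 1) ≤ d →
      ∑ a ∈ range (r + 2), ((r + 1).choose a : ℝ) * (c i) ^ a * g (j + a) = 0) :
    ∀ N, N ≤ d → g N = 0 := by
  have hdr : r + 1 ≤ d := by
    by_contra hcon
    have h1 : (s-1) * d ≤ (s-1) * r := Nat.mul_le_mul_left _ (by omega)
    have h2 : (s-1) * r ≤ s * r := Nat.mul_le_mul_right _ (by omega)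
    omega
  set γ : ℝ[X] := ∑ k ∈ range (d+1), Polynomial.monomial k ((d.choose k : ℝ) * g k) with hγdef
  have hcoeff : ∀ N, N ≤ d → γ.coeff N = (d.choose N : ℝ) * g N := by
    intro N hN
    rw [hγdef, Polynomial.finset_sum_coeff]
    rw [Finset.sum_eq_single N]
    · simp
    · intro b _ hb; simp [Polynomial.coeff_monomial, hb]
    · intro hN'; exact absurd (Finset.mem_range.mpr (by omega)) hN'
  have hγ : γ = 0 := by
    by_contra hne
    have hhasse : ∀ (i : Fin s) (n : ℕ), n + (r+1) ≤ d →
        (Polynomial.hasseDeriv n γ).eval (c i) = 0 := by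
      intro i n hn
      have expand : (Polynomial.hasseDeriv n γ).eval (c i)
          = ∑ k ∈ range (d+1), (k.choose n : ℝ) * ((d.choose k : ℝ) * g k) * (c i) ^ (k - n) := by
        rw [hγdef, map_sum, Polynomial.eval_finset_sum]
        apply Finset.sum_congr rfl
        intro k _
        rw [Polynomial.hasseDeriv_monomial, Polynomial.eval_monomial]
      rw [expand]
      have split : range (d+1) = Finset.Ico 0 n ∪ Finset.Ico n (d+1) := by
        rw [Finset.range_eq_Ico, Finset.Ico_union_Ico_eq_Ico (by omega) (by omega)]
      rw [split, Finset.sum_union (by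
        apply Finset.Ico_disjoint_Ico_consecutive)]
      have z1 : ∑ k ∈ Finset.Ico 0 n, (k.choose n : ℝ) * ((d.choose k : ℝ) * g k) * (c i) ^ (k - n) = 0 := by
        apply Finset.sum_eq_zero
        intro k hk
        rw [Finset.mem_Ico] at hk
        rw [Nat.choose_eq_zero_of_lt hk.2]
        simp
      rw [z1, zero_add]
      rw [Finset.sum_Ico_eq_sum_range]
      have e : d + 1 - n = (d - n) + 1 := by omega
      rw [e]
      have key : ∀ m ∈ range ((d-n)+1),
          ((n+m).choose n : ℝ) * ((d.choose (n+m) : ℝ) * g (n+m)) * (c i) ^ (n + m - n)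
          = (d.choose n : ℝ) * (((d-n).choose m : ℝ) * (c i) ^ m * g (n+m)) := by
        intro m hm
        rw [Finset.mem_range] at hm
        have e1 : n + m - n = m := by omega
        rw [e1]
        have hci := choose_id d n m (by omega)
        linear_combination (g (n+m) * (c i)^m) * hci
      rw [Finset.sum_congr rfl key, ← Finset.mul_sum]
      rw [step1 r d (c i) g (H i) (d - n) (by omega) n (by omega)]
      ring
    have hdvd : ∀ i : Fin s, (X - Polynomial.C (c i)) ^ (d - r) ∣ γ := by
      intro i
      conv_rhs => rw [← Polynomial.sum_taylor_eq γ (c i)]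
      rw [Polynomial.sum_def]
      apply Finset.dvd_sum
      intro k hk
      by_cases hkd : d - r ≤ k
      · exact Dvd.dvd.mul_left (pow_dvd_pow _ hkd) _
      · exfalso
        rw [Polynomial.mem_support_iff] at hk
        apply hk
        rw [Polynomial.taylor_coeff]
        exact hhasse i k (by omega)
    have hprod : (∏ i : Fin s, (X - Polynomial.C (c i)) ^ (d - r)) ∣ γ := by
      apply Finset.prod_dvd_of_coprime
      · intro i _ j _ hij
        exact ((Polynomial.pairwise_coprime_X_sub_C hc) hij).pow
      · intro i _; exact hdvd i
    have hdegγ : γ.natDegree ≤ d := by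
      rw [hγdef]
      apply Polynomial.natDegree_sum_le_of_forall_le
      intro k hk
      exact le_trans (Polynomial.natDegree_monomial_le _) (by
        rw [Finset.mem_range] at hk; omega)
    have hdegp : (∏ i : Fin s, (X - Polynomial.C (c i)) ^ (d - r)).natDegree = s * (d - r) := by
      rw [Polynomial.natDegree_prod]
      · simp [Polynomial.natDegree_pow, Polynomial.natDegree_X_sub_C, Finset.sum_const,
          Finset.card_univ, mul_comm]
      · intro i _
        exact pow_ne_zero _ (Polynomial.X_sub_C_ne_zero (c i))
    have hled : s * (d - r) ≤ d := by
      have := Polynomial.natDegree_le_of_dvd hprod hne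
      omega
    -- arithmetic contradiction
    obtain ⟨u, rfl⟩ : ∃ u, s = u + 2 := ⟨s - 2, by omega⟩
    obtain ⟨t, rfl, ht⟩ : ∃ t, d = t + r ∧ 1 ≤ t := ⟨d - r, by omega, by omega⟩
    have e3 : t + r - r = t := by omega
    have e4 : u + 2 - 1 = u + 1 := by omega
    rw [e3] at hled
    rw [e4] at hd
    nlinarith [hled, hd]
  intro N hN
  have h := hcoeff N hN
  rw [hγ] at h
  simp only [Polynomial.coeff_zero] at h
  have hch : (d.choose N : ℝ) ≠ 0 := Nat.cast_ne_zero.mpr (Nat.choose_pos hN).ne'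
  exact (mul_eq_zero.mp h.symm).resolve_left hch

lemma pi1 (r j : ℕ) (c : ℝ) :
    (1 + Polynomial.C c * X) ^ (r + 1) * X ^ j
      = ∑ a ∈ range (r + 2), Polynomial.C (((r+1).choose a : ℝ) * c ^ a) * X ^ (j + a) := by
  rw [add_comm (1 : ℝ[X]), add_pow, Finset.sum_mul]
  apply Finset.sum_congr rfl
  intro a _
  simp only [one_pow, mul_pow, Polynomial.C_mul, Polynomial.C_pow, Polynomial.C_eq_natCast,
    pow_add]
  ring

lemma spanlem (s r d : ℕ) (hs : 2 ≤ s) (c : Fin s → ℝ) (hc : Function.Injective c)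
    (hd : s * r + 1 ≤ (s - 1) * d) :
    ∀ N ≤ d, (X ^ N : ℝ[X]) ∈ Submodule.span ℝ
      (Set.range fun p : Fin s × Fin (d - r) =>
        (1 + Polynomial.C (c p.1) * X) ^ (r + 1) * X ^ (p.2 : ℕ)) := by
  intro N hN
  by_contra hmem
  set W := Submodule.span ℝ
      (Set.range fun p : Fin s × Fin (d - r) =>
        (1 + Polynomial.C (c p.1) * X) ^ (r + 1) * X ^ (p.2 : ℕ)) with hW
  have hq : W.mkQ (X ^ N) ≠ 0 := by
    rw [Submodule.mkQ_apply, ne_eq, Submodule.Quotient.mk_eq_zero]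
    exact hmem
  obtain ⟨ψ, hψ⟩ : ∃ ψ : Module.Dual ℝ (ℝ[X] ⧸ W), ψ (W.mkQ (X ^ N)) ≠ 0 := by
    by_contra hall
    push_neg at hall
    exact hq ((Module.forall_dual_apply_eq_zero_iff ℝ _).mp hall)
  set φ : ℝ[X] →ₗ[ℝ] ℝ := ψ.comp W.mkQ with hφ
  have hgen : ∀ (i : Fin s) (j : ℕ), j + (r+1) ≤ d →
      ∑ a ∈ range (r+2), ((r+1).choose a : ℝ) * (c i)^a * φ (X ^ (j+a)) = 0 := by
    intro i j hj
    have hjW : ((1 + Polynomial.C (c i) * X) ^ (r + 1) * X ^ j) ∈ W := by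
      apply Submodule.subset_span
      exact ⟨(i, ⟨j, by omega⟩), rfl⟩
    have h0 : φ ((1 + Polynomial.C (c i) * X) ^ (r + 1) * X ^ j) = 0 := by
      rw [hφ, LinearMap.comp_apply, Submodule.mkQ_apply,
        (Submodule.Quotient.mk_eq_zero W).mpr hjW, map_zero]
    rw [pi1, map_sum] at h0
    rw [← h0]
    apply Finset.sum_congr rfl
    intro a _
    rw [← Polynomial.smul_eq_C_mul, map_smul, smul_eq_mul]
  have hz := heart s r d hs c hc hd (fun k => φ (X ^ k)) hgen N hN
  exact hψ hz

noncomputable def PhiAux (d : ℕ) : ℝ[X] →ₗ[ℝ] MvPolynomial (Fin 2) ℝ where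
  toFun f := ∑ k ∈ range (d+1),
    f.coeff k • (MvPolynomial.X 0 ^ (d - k) * MvPolynomial.X 1 ^ k)
  map_add' f g := by
    simp [Polynomial.coeff_add, add_smul, Finset.sum_add_distrib]
  map_smul' a f := by
    simp [Polynomial.coeff_smul, smul_smul, Finset.smul_sum, smul_eq_mul]

lemma Phi_X_pow (d m : ℕ) (hm : m ≤ d) :
    PhiAux d (X ^ m) = MvPolynomial.X 0 ^ (d - m) * MvPolynomial.X 1 ^ m := by
  show (∑ k ∈ range (d+1), (X ^ m : ℝ[X]).coeff k •
      (MvPolynomial.X 0 ^ (d - k) * MvPolynomial.X 1 ^ k)) = _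
  rw [Finset.sum_eq_single m]
  · simp [Polynomial.coeff_X_pow]
  · intro b _ hb; simp [Polynomial.coeff_X_pow, Ne.symm hb, hb]
  · intro hm'; exact absurd (Finset.mem_range.mpr (by omega)) hm'

lemma Phi_gen (d r j : ℕ) (c : ℝ) (hj : j + (r+1) ≤ d) :
    PhiAux d ((1 + Polynomial.C c * X)^(r+1) * X^j)
      = (MvPolynomial.X 0 + MvPolynomial.C c * MvPolynomial.X 1)^(r+1)
        * (MvPolynomial.X 0 ^ (d - (r+1) - j) * MvPolynomial.X 1 ^ j) := by
  rw [pi1, map_sum]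
  rw [add_comm (MvPolynomial.X (0 : Fin 2)), add_pow, Finset.sum_mul]
  apply Finset.sum_congr rfl
  intro a ha
  rw [Finset.mem_range] at ha
  have haj : j + a ≤ d := by omega
  rw [← Polynomial.smul_eq_C_mul, map_smul, Phi_X_pow d (j+a) haj]
  have e : (r + 1 - a) + (d - (r+1) - j) = d - (j + a) := by omega
  rw [MvPolynomial.smul_eq_C_mul, ← e]
  simp only [MvPolynomial.C_mul, MvPolynomial.C_pow, map_natCast, mul_pow, pow_add]
  ring

end aux

open MvPolynomial

/-- For distinct reals `c₁, …, c_s` (`s ≥ 2`), `r ≥ 0`, and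
`J = ⟨(x+c₁y)^{r+1}, …, (x+c_sy)^{r+1}⟩ ⊆ ℝ[x,y]`, for every degree `d` with
`d ≥ (sr+1)/(s-1)` (i.e. `(s-1)d ≥ sr+1`) one has `J_d = ℝ[x,y]_d`:
every homogeneous polynomial of degree `d` lies in `J`. -/
theorem stmt_3 (s r : ℕ) (hs : 2 ≤ s) (c : Fin s → ℝ) (hc : Function.Injective c)
    (J : Ideal (MvPolynomial (Fin 2) ℝ))
    (hJ : J = Ideal.span (Set.range fun i : Fin s => (X 0 + C (c i) * X 1) ^ (r + 1)))
    (d : ℕ) (hd : s * r + 1 ≤ (s - 1) * d) :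
    ∀ p : MvPolynomial (Fin 2) ℝ, p.IsHomogeneous d → p ∈ J := by
  have hdr : r + 1 ≤ d := by
    by_contra hcon
    have h1 : (s-1) * d ≤ (s-1) * r := Nat.mul_le_mul_left _ (by omega)
    have h2 : (s-1) * r ≤ s * r := Nat.mul_le_mul_right _ (by omega)
    omega
  intro p hp
  rw [← MvPolynomial.support_sum_monomial_coeff p]
  apply Ideal.sum_mem
  intro m hm
  have hdeg : m 0 + m 1 = d := by
    have h := hp (MvPolynomial.mem_support_iff.mp hm)
    rw [Finsupp.weight_apply, Finsupp.sum_fintype] at h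
    · rw [← h, Fin.sum_univ_two]; simp
    · intro i; simp
  rw [MvPolynomial.monomial_eq]
  apply Ideal.mul_mem_left
  have hprod2 : (m.prod fun n e => (MvPolynomial.X n : MvPolynomial (Fin 2) ℝ) ^ e)
      = MvPolynomial.X 0 ^ (m 0) * MvPolynomial.X 1 ^ (m 1) := by
    rw [Finsupp.prod_fintype]
    · exact Fin.prod_univ_two _
    · intro i; rw [pow_zero]
  rw [hprod2]
  have hm1 : m 1 ≤ d := by omega
  have hx : (Polynomial.X ^ (m 1) : Polynomial ℝ) ∈ Submodule.span ℝ
      (Set.range fun q : Fin s × Fin (d - r) =>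
        (1 + Polynomial.C (c q.1) * Polynomial.X) ^ (r + 1) * Polynomial.X ^ (q.2 : ℕ)) :=
    spanlem s r d hs c hc hd (m 1) hm1
  have himg := Submodule.apply_mem_span_image_of_mem_span (PhiAux d) hx
  have hle : Submodule.span ℝ ((PhiAux d) '' (Set.range fun q : Fin s × Fin (d - r) =>
        (1 + Polynomial.C (c q.1) * Polynomial.X) ^ (r + 1) * Polynomial.X ^ (q.2 : ℕ)))
      ≤ Submodule.restrictScalars ℝ J := by
    rw [Submodule.span_le]
    rintro _ ⟨_, ⟨⟨i, j⟩, rfl⟩, rfl⟩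
    have hj : (j : ℕ) + (r + 1) ≤ d := by
      have := j.2; omega
    rw [Phi_gen d r (j : ℕ) (c i) hj]
    rw [Submodule.coe_restrictScalars, SetLike.mem_coe, hJ]
    exact Ideal.mul_mem_right _ _ (Ideal.subset_span ⟨i, rfl⟩)
  have hXY : MvPolynomial.X 0 ^ (m 0) * MvPolynomial.X 1 ^ (m 1)
      = PhiAux d (Polynomial.X ^ (m 1)) := by
    rw [Phi_X_pow d (m 1) hm1]
    congr 1
    rw [show d - m 1 = m 0 by omega]
  rw [hXY]
  exact hle himg
end

section
/- Let c₁, …, c_s be distinct real numbers with s ≥ 2, let r ≥ 0, and let J = ⟨(x+c₁y)^{r+1}, …, (x+c_s y)^{r+1}⟩ in ℝ[x,y]. Then for every d ≥ r+1, the dimension of the degree-d graded piece J_d equals min(d+1, s(d−r)). -/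
section StmtAuxUni
open Polynomial Finset

noncomputable section


/-- The operator `G ↦ n•G + (c - X) G'`, a "dehomogenized" directional derivative. -/
noncomputable def stmtDop (c : ℝ) (n : ℕ) : ℝ[X] →ₗ[ℝ] ℝ[X] :=
  (LinearMap.mulLeft ℝ (C (n : ℝ))) + (LinearMap.mulLeft ℝ (C c - X)) ∘ₗ (derivative : ℝ[X] →ₗ[ℝ] ℝ[X])

lemma stmtDop_apply (c : ℝ) (n : ℕ) (G : ℝ[X]) :
    stmtDop c n G = C (n : ℝ) * G + (C c - X) * derivative G := rfl

lemma coeff_stmtDop (c : ℝ) (n : ℕ) (G : ℝ[X]) (j : ℕ) :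
    (stmtDop c n G).coeff j = ((n : ℝ) - j) * G.coeff j + c * (j+1) * G.coeff (j+1) := by
  rw [stmtDop_apply, sub_mul]
  simp only [coeff_add, coeff_sub, coeff_C_mul, coeff_derivative]
  rcases j with _ | j
  · simp [coeff_X_mul_zero]
  · have : (X * derivative G).coeff (j+1) = (derivative G).coeff j := coeff_X_mul _ _
    rw [this, coeff_derivative]
    push_cast
    ring

lemma stmtDop_mem_degreeLT (c : ℝ) (n : ℕ) {G : ℝ[X]} (hG : G ∈ degreeLT ℝ (n+1)) :
    stmtDop c n G ∈ degreeLT ℝ n := by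
  rw [mem_degreeLT] at hG ⊢
  rw [degree_lt_iff_coeff_zero] at hG ⊢
  intro m hm
  rw [coeff_stmtDop]
  rcases eq_or_lt_of_le hm with h | h
  · rw [hG (m+1) (by exact_mod_cast by omega), ← h]
    simp
  · rw [hG m (by exact_mod_cast by omega), hG (m+1) (by exact_mod_cast by omega)]
    ring

lemma stmtDop_pow_mul (c : ℝ) (n q : ℕ) (B : ℝ[X]) :
    stmtDop c n ((X - C c)^q * B)
      = (X - C c)^q * (C ((n : ℝ) - (q : ℝ)) * B + (C c - X) * derivative B) := by
  rw [stmtDop_apply, derivative_mul, derivative_pow, derivative_X_sub_C, C_sub]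
  rcases q with _ | p
  · simp
  · have h1 : (X - C c)^(p+1) = (X - C c) * (X - C c)^p := pow_succ' _ _
    have h2 : p + 1 - 1 = p := rfl
    rw [h2, h1]
    push_cast
    ring

/-- `(X - C c)^q` divides `stmtDop c n G` iff it divides `G`, provided `q ≤ n`, `deg G ≤ n`. -/
lemma stmtDop_dvd_iff (c : ℝ) {n q : ℕ} (hq : q ≤ n) {G : ℝ[X]} (hG : G ∈ degreeLT ℝ (n+1)) :
    (X - C c)^q ∣ stmtDop c n G ↔ (X - C c)^q ∣ G := by
  constructor
  · intro hdvd
    rcases eq_or_ne G 0 with rfl | hG0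
    · exact dvd_zero _
    rcases Nat.lt_or_ge (rootMultiplicity c G) q with he | he
    swap
    · exact dvd_trans (pow_dvd_pow _ he) (pow_rootMultiplicity_dvd G c)
    exfalso
    set e := rootMultiplicity c G with hedef
    obtain ⟨B, hB, hBne⟩ : ∃ B, G = (X - C c)^e * B ∧ ¬ (X - C c) ∣ B := by
      obtain ⟨B, hB⟩ := pow_rootMultiplicity_dvd G c
      refine ⟨B, hB, fun hdvd' => ?_⟩
      obtain ⟨B', hB'⟩ := hdvd'
      have : (X - C c)^(e+1) ∣ G := ⟨B', by rw [hB, hB', pow_succ]; ring⟩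
      have := (Polynomial.le_rootMultiplicity_iff hG0).2 this
      omega
    set D := C ((n : ℝ) - (e : ℝ)) * B + (C c - X) * derivative B with hDdef
    have hDop : stmtDop c n G = (X - C c)^e * D := by rw [hB, stmtDop_pow_mul]
    have hXC : (X - C c) ∣ D := by
      have h1 : (X - C c)^(e+1) ∣ (X - C c)^e * D := by
        rw [← hDop]; exact dvd_trans (pow_dvd_pow _ (by omega)) hdvd
      obtain ⟨k, hk⟩ := h1
      rw [pow_succ, mul_assoc] at hk
      have hne : (X - C c)^e ≠ 0 := pow_ne_zero _ (X_sub_C_ne_zero c)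
      exact ⟨k, mul_left_cancel₀ hne hk⟩
    have hevalD : D.eval c = 0 := by
      obtain ⟨k, hk⟩ := hXC
      rw [hk]
      simp
    rw [hDdef] at hevalD
    simp only [eval_add, eval_mul, eval_C, eval_sub, eval_X, sub_self, zero_mul, add_zero] at hevalD
    have hne : (n : ℝ) - (e : ℝ) ≠ 0 := by
      have : e < n := by omega
      have : (e : ℝ) < n := by exact_mod_cast this
      intro h; linarith
    have hBc : B.eval c = 0 := by
      rcases mul_eq_zero.1 hevalD with h | h
      · exact absurd h hne
      · exact h
    exact hBne (dvd_iff_isRoot.2 hBc)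
  · rintro ⟨B, rfl⟩
    exact ⟨_, stmtDop_pow_mul c n q B⟩

/-- Iterated operator: `stmtDopIter c n p = stmtDop c (n-p+1) ∘ ... ∘ stmtDop c n`. -/
noncomputable def stmtDopIter (c : ℝ) : ℕ → ℕ → ℝ[X] →ₗ[ℝ] ℝ[X]
  | _, 0 => LinearMap.id
  | n, (p+1) => (stmtDopIter c (n-1) p) ∘ₗ stmtDop c n

lemma stmtDopIter_mem_degreeLT (c : ℝ) : ∀ (p n : ℕ), p ≤ n + 1 → ∀ {G : ℝ[X]},
    G ∈ degreeLT ℝ (n+1) → stmtDopIter c n p G ∈ degreeLT ℝ (n + 1 - p)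
  | 0, n, _, G, hG => by simpa [stmtDopIter] using hG
  | (p+1), n, hp, G, hG => by
    show stmtDopIter c (n-1) p (stmtDop c n G) ∈ _
    rcases Nat.eq_zero_or_pos n with rfl | hn
    · have hp0 : p = 0 := by omega
      subst hp0
      simpa [stmtDopIter] using stmtDop_mem_degreeLT c 0 hG
    · have h1 : stmtDop c n G ∈ degreeLT ℝ ((n-1)+1) := by
        have := stmtDop_mem_degreeLT c n hG
        rwa [Nat.sub_add_cancel hn]
      have := stmtDopIter_mem_degreeLT c p (n-1) (by omega) h1
      rwa [show n - 1 + 1 - p = n + 1 - (p+1) by omega] at this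

lemma stmtDopIter_eq_zero_iff (c : ℝ) : ∀ (p n : ℕ), p ≤ n + 1 → ∀ {G : ℝ[X]},
    G ∈ degreeLT ℝ (n+1) → (stmtDopIter c n p G = 0 ↔ (X - C c)^(n + 1 - p) ∣ G)
  | 0, n, _, G, hG => by
    simp only [stmtDopIter, LinearMap.id_coe, id_eq, Nat.sub_zero]
    constructor
    · rintro rfl; exact dvd_zero _
    · intro hdvd
      refine eq_zero_of_dvd_of_degree_lt hdvd ?_
      rw [degree_pow, degree_X_sub_C]
      rw [mem_degreeLT] at hG
      calc G.degree < (n+1 : ℕ) := hG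
        _ = ((n+1) : ℕ) • (1 : WithBot ℕ) := by simp
  | (p+1), n, hp, G, hG => by
    show stmtDopIter c (n-1) p (stmtDop c n G) = 0 ↔ _
    rcases Nat.eq_zero_or_pos n with rfl | hn
    · have hp0 : p = 0 := by omega
      subst hp0
      simp only [stmtDopIter, LinearMap.id_coe, id_eq, LinearMap.coe_comp, Function.comp_apply]
      constructor
      · intro _
        simp
      · intro _
        have h0 : stmtDop c 0 G ∈ degreeLT ℝ 0 := stmtDop_mem_degreeLT c 0 hG
        rw [mem_degreeLT] at h0
        have h1 : ∀ m : ℕ, (0:ℕ) ≤ m → (stmtDop c 0 G).coeff m = 0 :=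
          (Polynomial.degree_lt_iff_coeff_zero _ 0).1 (by exact_mod_cast h0)
        ext m
        simpa using h1 m (Nat.zero_le m)
    · have h1 : stmtDop c n G ∈ degreeLT ℝ ((n-1)+1) := by
        have := stmtDop_mem_degreeLT c n hG
        rwa [Nat.sub_add_cancel hn]
      rw [stmtDopIter_eq_zero_iff c p (n-1) (by omega) h1]
      rw [show n - 1 + 1 - p = n - p by omega]
      rw [stmtDop_dvd_iff c (by omega) hG]
      rw [show n + 1 - (p+1) = n - p by omega]




/-- Weighted apolarity pairing on polynomials of degree ≤ n. -/
noncomputable def stmtPair (n : ℕ) (F G : ℝ[X]) : ℝ :=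
  ∑ j ∈ Finset.range (n+1), (j.factorial * (n-j).factorial : ℝ) * F.coeff j * G.coeff j

lemma stmtDopIter_zero (c : ℝ) (n : ℕ) : stmtDopIter c n 0 = LinearMap.id := rfl
lemma stmtDopIter_succ (c : ℝ) (n p : ℕ) :
    stmtDopIter c n (p+1) = (stmtDopIter c (n-1) p) ∘ₗ stmtDop c n := rfl
lemma stmtPair_def (n : ℕ) (F G : ℝ[X]) : stmtPair n F G =
  ∑ j ∈ Finset.range (n+1), (j.factorial * (n-j).factorial : ℝ) * F.coeff j * G.coeff j := rfl

lemma stmtPair_zero_right (n : ℕ) (F : ℝ[X]) : stmtPair n F 0 = 0 := by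
  unfold stmtPair; simp


lemma stmtPair_step (c : ℝ) (n : ℕ) (hn : 1 ≤ n) (F G : ℝ[X]) (hF : F ∈ degreeLT ℝ n) :
    stmtPair n ((1 + C c * X) * F) G = stmtPair (n-1) F (stmtDop c n G) := by
  have hFn : F.coeff n = 0 := coeff_eq_zero_of_degree_lt (mem_degreeLT.1 hF)
  have hcoeff : ∀ j, ((1 + C c * X) * F).coeff j = F.coeff j + c * (X * F).coeff j := by
    intro j; rw [add_mul, one_mul, coeff_add, mul_assoc, coeff_C_mul]
  unfold stmtPair
  rw [show n - 1 + 1 = n from by omega]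
  have L1 : ∑ j ∈ range (n+1), (j.factorial * (n-j).factorial : ℝ) * ((1 + C c * X) * F).coeff j * G.coeff j
      = (∑ j ∈ range (n+1), (j.factorial * (n-j).factorial : ℝ) * F.coeff j * G.coeff j)
        + ∑ j ∈ range (n+1), (j.factorial * (n-j).factorial : ℝ) * (c * (X * F).coeff j) * G.coeff j := by
    rw [← Finset.sum_add_distrib]
    exact Finset.sum_congr rfl fun j _ => by rw [hcoeff]; ring
  rw [L1]
  have L2 : ∑ j ∈ range (n+1), (j.factorial * (n-j).factorial : ℝ) * F.coeff j * G.coeff j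
      = ∑ j ∈ range n, (j.factorial * (n-j).factorial : ℝ) * F.coeff j * G.coeff j := by
    rw [Finset.sum_range_succ, hFn]; simp
  have L3 : ∑ j ∈ range (n+1), (j.factorial * (n-j).factorial : ℝ) * (c * (X * F).coeff j) * G.coeff j
      = ∑ j ∈ range n, ((j+1).factorial * (n-(j+1)).factorial : ℝ) * (c * F.coeff j) * G.coeff (j+1) := by
    rw [Finset.sum_range_succ']
    simp only [coeff_X_mul, coeff_X_mul_zero]
    simp
  rw [L2, L3, ← Finset.sum_add_distrib]
  apply Finset.sum_congr rfl
  intro j hj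
  have hjn : j < n := Finset.mem_range.1 hj
  have e1 : ((n-j).factorial : ℝ) = ((n : ℝ) - j) * ((n-1-j).factorial : ℝ) := by
    have h1 : n - j = (n-1-j) + 1 := by omega
    rw [h1, Nat.factorial_succ]
    push_cast
    have : ((n:ℝ) - 1 - (j:ℝ)) + 1 = (n:ℝ) - j := by ring
    rw [show ((n - 1 - j : ℕ) : ℝ) = (n:ℝ) - 1 - (j:ℝ) from by push_cast [Nat.cast_sub (by omega : j ≤ n - 1), Nat.cast_sub (by omega : 1 ≤ n)]; ring]
    rw [this]
  have e2 : (((j+1).factorial : ℝ) * ((n-(j+1)).factorial : ℝ)) = ((j:ℝ)+1) * (j.factorial : ℝ) * ((n-1-j).factorial : ℝ) := by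
    rw [Nat.factorial_succ]
    have : n - (j+1) = n - 1 - j := by omega
    rw [this]
    push_cast
    ring
  rw [coeff_stmtDop] at *
  rw [e1, e2]
  ring

lemma stmtPair_iter (c : ℝ) : ∀ (p n : ℕ), p ≤ n → ∀ (F G : ℝ[X]), F ∈ degreeLT ℝ (n+1-p) →
    stmtPair n ((1 + C c * X)^p * F) G = stmtPair (n-p) F (stmtDopIter c n p G)
  | 0, n, _, F, G, hF => by simp [stmtDopIter_zero]
  | (p+1), n, hp, F, G, hF => by
    have hdeg1 : (1 + C c * X).degree ≤ 1 := by
      refine le_trans (degree_add_le _ _) ?_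
      simp only [degree_one]
      refine max_le (by norm_num) ?_
      refine le_trans (degree_mul_le _ _) ?_
      refine le_trans (add_le_add degree_C_le degree_X_le) ?_
      norm_num
    have hF' : (1 + C c * X)^p * F ∈ degreeLT ℝ n := by
      rw [mem_degreeLT]
      refine lt_of_le_of_lt (degree_mul_le _ _) ?_
      have h1 : ((1 + C c * X)^p).degree ≤ ((p : ℕ) : WithBot ℕ) := by
        refine le_trans (degree_pow_le _ _) ?_
        calc p • (1 + C c * X).degree ≤ p • (1 : WithBot ℕ) := nsmul_le_nsmul_right hdeg1 p
          _ = ((p : ℕ) : WithBot ℕ) := by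
            simp [nsmul_eq_mul]
      have h2 : F.degree < ((n - p : ℕ) : WithBot ℕ) := by
        have := mem_degreeLT.1 hF
        rwa [show n + 1 - (p+1) = n - p from by omega] at this
      calc ((1 + C c * X)^p).degree + F.degree ≤ ((p : ℕ) : WithBot ℕ) + F.degree := by
            exact add_le_add h1 le_rfl
        _ < ((p : ℕ) : WithBot ℕ) + ((n - p : ℕ) : WithBot ℕ) := by
            exact WithBot.add_lt_add_left (by exact_mod_cast WithBot.coe_ne_bot) h2
        _ = ((n : ℕ) : WithBot ℕ) := by
            rw [← Nat.cast_add]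
            congr 1
            omega
    have hstep := stmtPair_step c n (by omega) ((1 + C c * X)^p * F) G hF'
    have hF2 : F ∈ degreeLT ℝ ((n-1) + 1 - p) := by
      rwa [show (n-1) + 1 - p = n + 1 - (p+1) from by omega]
    calc stmtPair n ((1 + C c * X)^(p+1) * F) G
        = stmtPair n ((1 + C c * X) * ((1 + C c * X)^p * F)) G := by
          rw [← mul_assoc, ← pow_succ']
      _ = stmtPair (n-1) ((1 + C c * X)^p * F) (stmtDop c n G) := hstep
      _ = stmtPair ((n-1)-p) F (stmtDopIter c (n-1) p (stmtDop c n G)) :=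
          stmtPair_iter c p (n-1) (by omega) F _ hF2
      _ = stmtPair (n-(p+1)) F (stmtDopIter c n (p+1) G) := by
          rw [stmtDopIter_succ]
          rw [show (n-1)-p = n-(p+1) from by omega]
          rfl

lemma stmtPair_X_pow (m k : ℕ) (hk : k ≤ m) (H : ℝ[X]) :
    stmtPair m (X^k) H = (k.factorial * (m-k).factorial : ℝ) * H.coeff k := by
  unfold stmtPair
  rw [Finset.sum_eq_single k]
  · rw [coeff_X_pow, if_pos rfl]; ring
  · intro b _ hbne
    rw [coeff_X_pow, if_neg hbne]; ring
  · intro hk'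
    exact absurd (Finset.mem_range.2 (by omega)) hk'

lemma stmtPair_nondegen (m : ℕ) (H : ℝ[X]) (hH : H ∈ degreeLT ℝ (m+1))
    (h : ∀ k, k ≤ m → stmtPair m (X^k) H = 0) : H = 0 := by
  ext j
  rcases le_or_gt j m with hj | hj
  · have := h j hj
    rw [stmtPair_X_pow m j hj] at this
    have hfac : ((j.factorial * (m-j).factorial : ℕ) : ℝ) ≠ 0 := by
      exact_mod_cast Nat.mul_ne_zero (Nat.factorial_ne_zero _) (Nat.factorial_ne_zero _)
    push_cast at this hfac ⊢
    rcases mul_eq_zero.1 this with h' | h'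
    · exact absurd h' hfac
    · simpa using h'
  · simp only [coeff_zero]
    refine coeff_eq_zero_of_degree_lt (lt_of_lt_of_le (mem_degreeLT.1 hH) ?_)
    exact_mod_cast Nat.cast_le.2 (by omega : m + 1 ≤ j)

/-- Main equivalence: the pairing conditions against the generators for a single `c` are
equivalent to divisibility by `(X - C c)^(d-r)`. -/
lemma stmt_ker_iff (r d : ℕ) (hd : r+1 ≤ d) (ci : ℝ) (P : ℝ[X]) (hP : P ∈ degreeLT ℝ (d+1)) :
    (∀ k : ℕ, k < d - r → stmtPair d ((1 + C ci * X)^(r+1) * X^k) P = 0)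
      ↔ (X - C ci)^(d-r) ∣ P := by
  have hiter : ∀ k : ℕ, k < d - r →
      stmtPair d ((1 + C ci * X)^(r+1) * X^k) P
        = stmtPair (d-(r+1)) (X^k) (stmtDopIter ci d (r+1) P) := by
    intro k hk
    refine stmtPair_iter ci (r+1) d (by omega) (X^k) P ?_
    rw [mem_degreeLT, degree_X_pow]
    exact_mod_cast Nat.cast_lt.2 (by omega : k < d + 1 - (r+1))
  rw [show d - r = d + 1 - (r+1) from by omega,
    ← stmtDopIter_eq_zero_iff ci (r+1) d (by omega) hP]
  constructor
  · intro h
    have hmem : stmtDopIter ci d (r+1) P ∈ degreeLT ℝ (d + 1 - (r+1)) :=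
      stmtDopIter_mem_degreeLT ci (r+1) d (by omega) hP
    rw [show d + 1 - (r+1) = (d - (r+1)) + 1 from by omega] at hmem
    refine stmtPair_nondegen (d-(r+1)) _ hmem ?_
    intro k hk
    rw [← hiter k (by omega)]
    exact h k (by omega)
  · intro h k hk
    rw [hiter k (by omega), h, stmtPair_zero_right]



/-- finrank of image of a submodule under a map injective on it. -/
lemma stmt_finrank_map_eq {M M' : Type*} [AddCommGroup M] [Module ℝ M]
    [AddCommGroup M'] [Module ℝ M'] (f : M →ₗ[ℝ] M') (p : Submodule ℝ M)
    (h : ∀ x ∈ p, f x = 0 → x = 0) :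
    Module.finrank ℝ (p.map f) = Module.finrank ℝ p := by
  have hmem : ∀ x ∈ p, f x ∈ p.map f := fun x hx => Submodule.mem_map_of_mem hx
  refine (LinearEquiv.finrank_eq (LinearEquiv.ofBijective (f.restrict hmem) ⟨?_, ?_⟩)).symm
  · intro a b hab
    have hval : f (a : M) = f (b : M) := by
      have := congrArg Subtype.val hab
      simpa [LinearMap.restrict_apply] using this
    have hz : f ((a : M) - (b : M)) = 0 := by rw [map_sub, hval, sub_self]
    have := h _ (Submodule.sub_mem p a.2 b.2) hz
    exact Subtype.ext (by rwa [sub_eq_zero] at this)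
  · rintro ⟨y, hy⟩
    obtain ⟨x, hx, rfl⟩ := hy
    exact ⟨⟨x, hx⟩, rfl⟩

lemma stmt_finrank_degreeLT (m : ℕ) : Module.finrank ℝ (degreeLT ℝ m) = m := by
  rw [LinearEquiv.finrank_eq (degreeLTEquiv ℝ m), Module.finrank_fin_fun]

lemma stmt_gen_mem_degreeLT (ci : ℝ) (r d k : ℕ) (hk : r + 1 + k ≤ d) :
    (1 + C ci * X)^(r+1) * X^k ∈ degreeLT ℝ (d+1) := by
  rw [mem_degreeLT]
  have hdeg1 : (1 + C ci * X).degree ≤ 1 := by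
    refine le_trans (degree_add_le _ _) ?_
    simp only [degree_one]
    refine max_le (by norm_num) ?_
    refine le_trans (degree_mul_le _ _) ?_
    refine le_trans (add_le_add degree_C_le degree_X_le) ?_
    norm_num
  refine lt_of_le_of_lt (degree_mul_le _ _) ?_
  have h1 : ((1 + C ci * X)^(r+1)).degree ≤ ((r+1 : ℕ) : WithBot ℕ) := by
    refine le_trans (degree_pow_le _ _) ?_
    calc (r+1) • (1 + C ci * X).degree ≤ (r+1) • (1 : WithBot ℕ) := nsmul_le_nsmul_right hdeg1 _
      _ = ((r+1 : ℕ) : WithBot ℕ) := by simp [nsmul_eq_mul]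
  refine lt_of_le_of_lt (add_le_add h1 (degree_X_pow_le k)) ?_
  rw [← Nat.cast_add]
  exact_mod_cast Nat.cast_lt.2 (by omega : r + 1 + k < d + 1)

/-- The core univariate dimension count. -/
lemma stmt_univar_rank (s r d : ℕ) (hd : r+1 ≤ d) (c : Fin s → ℝ) (hc : Function.Injective c) :
    Module.finrank ℝ (Submodule.span ℝ (Set.range (fun ik : Fin s × Fin (d-r) =>
      (1 + C (c ik.1) * X)^(r+1) * X^(ik.2 : ℕ)))) = min (d+1) (s*(d-r)) := by
  classical
  set q := s * (d - r) with hq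
  set g : Fin s × Fin (d-r) → ℝ[X] := fun ik => (1 + C (c ik.1) * X)^(r+1) * X^(ik.2 : ℕ) with hg
  have hgmem : ∀ ik, g ik ∈ degreeLT ℝ (d+1) := by
    intro ik
    exact stmt_gen_mem_degreeLT (c ik.1) r d ik.2 (by have := ik.2.2; omega)
  have hspan : Submodule.span ℝ (Set.range g) ≤ degreeLT ℝ (d+1) := by
    rw [Submodule.span_le]
    rintro _ ⟨ik, rfl⟩
    exact hgmem ik
  -- the coefficient map and the matrix
  set coeffFin : ℝ[X] →ₗ[ℝ] (Fin (d+1) → ℝ) := LinearMap.pi (fun j : Fin (d+1) => lcoeff ℝ (j : ℕ)) with hcoeffFin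
  set N : Matrix (Fin s × Fin (d-r)) (Fin (d+1)) ℝ := fun ik j => (g ik).coeff j with hN
  -- step 1 : finrank span g = rank N
  have step1 : Module.finrank ℝ (Submodule.span ℝ (Set.range g)) = N.rank := by
    have hNg : (N : (Fin s × Fin (d-r)) → (Fin (d+1) → ℝ)) = coeffFin ∘ g := rfl
    rw [Matrix.rank_eq_finrank_span_row]
    show _ = Module.finrank ℝ (Submodule.span ℝ (Set.range (coeffFin ∘ g)))
    rw [Set.range_comp, ← Submodule.map_span]
    refine (stmt_finrank_map_eq coeffFin _ ?_).symm
    intro x hx hfx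
    have hxdeg := hspan hx
    rw [mem_degreeLT] at hxdeg
    ext j
    rcases lt_or_ge j (d+1) with hj | hj
    · have := congrFun hfx ⟨j, hj⟩
      simpa [hcoeffFin] using this
    · simp only [coeff_zero]
      exact coeff_eq_zero_of_degree_lt (lt_of_lt_of_le hxdeg (by exact_mod_cast Nat.cast_le.2 hj))
  -- step 2 : rank N = rank (N * W)
  set w : Fin (d+1) → ℝ := fun j => ((j : ℕ).factorial * (d - (j:ℕ)).factorial : ℝ) with hw
  set W : Matrix (Fin (d+1)) (Fin (d+1)) ℝ := Matrix.diagonal w with hW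
  have hWunit : IsUnit W.det := by
    rw [hW, Matrix.det_diagonal]
    refine (Finset.prod_ne_zero_iff.2 fun j _ => ?_).isUnit
    rw [hw]
    positivity
  have step2 : N.rank = (N * W).rank := (Matrix.rank_mul_eq_left_of_isUnit_det W N hWunit).symm
  -- step 3 : rank-nullity
  have step3 : (N * W).rank + Module.finrank ℝ (LinearMap.ker (N * W).mulVecLin) = d + 1 := by
    have h := LinearMap.finrank_range_add_finrank_ker ((N * W).mulVecLin)
    rw [Module.finrank_fin_fun] at h
    exact h
  -- the polynomial Q
  set Q : ℝ[X] := ∏ i : Fin s, (X - C (c i))^(d-r) with hQ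
  have hQmonic : Q.Monic := monic_prod_of_monic _ _ fun i _ => (monic_X_sub_C (c i)).pow _
  have hQne : Q ≠ 0 := hQmonic.ne_zero
  have hQnatdeg : Q.natDegree = q := by
    rw [hQ, natDegree_prod _ _ (fun i _ => pow_ne_zero _ (X_sub_C_ne_zero (c i)))]
    simp [natDegree_pow, natDegree_X_sub_C, hq, mul_comm]
  have hQdeg : Q.degree = (q : WithBot ℕ) := by
    rw [degree_eq_natDegree hQne, hQnatdeg]
  -- step 4 : identify the kernel
  set Pmap : (Fin (d+1) → ℝ) →ₗ[ℝ] ℝ[X] :=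
    (degreeLT ℝ (d+1)).subtype ∘ₗ ((degreeLTEquiv ℝ (d+1)).symm : (Fin (d+1) → ℝ) →ₗ[ℝ] degreeLT ℝ (d+1)) with hPmap
  have hPmem : ∀ x, Pmap x ∈ degreeLT ℝ (d+1) := fun x => ((degreeLTEquiv ℝ (d+1)).symm x).2
  have hPcoeff : ∀ (x) (j : Fin (d+1)), (Pmap x).coeff j = x j := by
    intro x j
    have := congrFun ((degreeLTEquiv ℝ (d+1)).apply_symm_apply x) j
    exact this
  have hPinj : Function.Injective Pmap := by
    intro a b hab
    have : (degreeLTEquiv ℝ (d+1)).symm a = (degreeLTEquiv ℝ (d+1)).symm b := Subtype.ext hab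
    simpa using congrArg (degreeLTEquiv ℝ (d+1)) this
  set K : Submodule ℝ ℝ[X] :=
    degreeLT ℝ (d+1) ⊓ Submodule.restrictScalars ℝ (Ideal.span {Q}) with hK
  have hker : ∀ x : Fin (d+1) → ℝ, x ∈ LinearMap.ker (N * W).mulVecLin ↔ Pmap x ∈ K := by
    intro x
    have hcond : ∀ ik : Fin s × Fin (d-r),
        ((N * W).mulVec x) ik = stmtPair d (g ik) (Pmap x) := by
      intro ik
      rw [stmtPair_def]
      rw [Matrix.mulVec, dotProduct]
      rw [← Fin.sum_univ_eq_sum_range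
        (fun j => ((j.factorial * (d-j).factorial : ℝ)) * (g ik).coeff j * (Pmap x).coeff j) (d+1)]
      refine Finset.sum_congr rfl fun j _ => ?_
      rw [hW, Matrix.mul_diagonal, hPcoeff x j]
      show N ik j * w j * x j = _
      rw [hN, hw]
      ring
    rw [LinearMap.mem_ker, Matrix.mulVecLin_apply]
    have h1 : (N * W).mulVec x = 0 ↔ ∀ ik, stmtPair d (g ik) (Pmap x) = 0 := by
      rw [funext_iff]
      exact forall_congr' fun ik => by rw [hcond ik]; simp
    rw [h1]
    have h2 : (∀ ik : Fin s × Fin (d-r), stmtPair d (g ik) (Pmap x) = 0)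
        ↔ ∀ i : Fin s, (X - C (c i))^(d-r) ∣ Pmap x := by
      constructor
      · intro h i
        rw [← stmt_ker_iff r d hd (c i) (Pmap x) (hPmem x)]
        intro k hk
        exact h (i, ⟨k, hk⟩)
      · intro h ik
        have := (stmt_ker_iff r d hd (c ik.1) (Pmap x) (hPmem x)).2 (h ik.1)
        exact this ik.2 ik.2.2
    rw [h2]
    constructor
    · intro h
      refine ⟨hPmem x, ?_⟩
      show Pmap x ∈ Ideal.span {Q}
      rw [Ideal.mem_span_singleton, hQ]
      refine Finset.prod_dvd_of_coprime ?_ fun i _ => h i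
      intro i _ j _ hij
      exact ((pairwise_coprime_X_sub_C hc) hij).pow
    · rintro ⟨_, hmem⟩ i
      have : Q ∣ Pmap x := Ideal.mem_span_singleton.1 hmem
      exact dvd_trans (Finset.dvd_prod_of_mem (fun i => (X - C (c i))^(d-r)) (Finset.mem_univ i)) this
  have hmap : (LinearMap.ker (N * W).mulVecLin).map Pmap = K := by
    ext A
    constructor
    · rintro ⟨x, hx, rfl⟩
      exact (hker x).1 hx
    · intro hA
      have hval : Pmap (degreeLTEquiv ℝ (d+1) ⟨A, hA.1⟩) = A := by
        rw [hPmap]; simp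
      exact Submodule.mem_map.2 ⟨degreeLTEquiv ℝ (d+1) ⟨A, hA.1⟩,
        (hker _).2 (by rwa [hval]), hval⟩
  have step4 : Module.finrank ℝ (LinearMap.ker (N * W).mulVecLin) = Module.finrank ℝ K := by
    rw [← hmap]
    exact (stmt_finrank_map_eq Pmap _ (fun x _ hx => hPinj (by rw [hx]; exact (map_zero Pmap).symm))).symm
  -- step 5 : compute finrank K
  have step5 : Module.finrank ℝ K = (d + 1) - min (d+1) q := by
    rcases le_or_gt (d+1) q with hcase | hcase
    · -- K = ⊥
      have : K = ⊥ := by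
        rw [Submodule.eq_bot_iff]
        rintro A ⟨h1, h2⟩
        have hdvd : Q ∣ A := Ideal.mem_span_singleton.1 h2
        refine eq_zero_of_dvd_of_degree_lt hdvd ?_
        rw [hQdeg]
        refine lt_of_lt_of_le (mem_degreeLT.1 h1) ?_
        exact_mod_cast Nat.cast_le.2 hcase
      rw [this, finrank_bot]
      omega
    · -- K = Q * degreeLT (d+1-q)
      have hqd : q ≤ d := by omega
      set mulQ : ℝ[X] →ₗ[ℝ] ℝ[X] := LinearMap.mulLeft ℝ Q with hmulQ
      have hKeq : K = (degreeLT ℝ (d+1-q)).map mulQ := by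
        ext A
        constructor
        · rintro ⟨h1, h2⟩
          obtain ⟨B, rfl⟩ := Ideal.mem_span_singleton.1 h2
          refine Submodule.mem_map.2 ⟨B, ?_, rfl⟩
          show B ∈ degreeLT ℝ (d+1-q)
          rw [mem_degreeLT]
          rcases eq_or_ne B 0 with rfl | hB0
          · simp only [degree_zero]
            exact WithBot.bot_lt_coe _
          have hAne : Q * B ≠ 0 := mul_ne_zero hQne hB0
          have hAdeg := mem_degreeLT.1 h1
          rw [degree_mul, hQdeg, degree_eq_natDegree hB0] at hAdeg
          rw [degree_eq_natDegree hB0]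
          have h3 : (q : ℕ) + B.natDegree < d + 1 := by exact_mod_cast hAdeg
          have h4 : B.natDegree < d + 1 - q := by omega
          exact_mod_cast Nat.cast_lt.2 h4
        · rintro ⟨B, hB, rfl⟩
          have hmul : mulQ B = Q * B := rfl
          constructor
          · show Q * B ∈ degreeLT ℝ (d+1)
            rw [mem_degreeLT]
            rcases eq_or_ne B 0 with rfl | hB0
            · simp only [mul_zero, degree_zero]
              exact WithBot.bot_lt_coe _
            rw [degree_mul, hQdeg, degree_eq_natDegree hB0]
            have hBdeg := mem_degreeLT.1 hB
            rw [degree_eq_natDegree hB0] at hBdeg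
            have : B.natDegree < d + 1 - q := by exact_mod_cast hBdeg
            exact_mod_cast Nat.cast_lt.2 (by omega : q + B.natDegree < d + 1)
          · show mulQ B ∈ Ideal.span {Q}
            rw [hmul, Ideal.mem_span_singleton]
            exact Dvd.intro B rfl
      have hinj : ∀ x ∈ degreeLT ℝ (d+1-q), mulQ x = 0 → x = 0 := by
        intro x _ hx
        have : Q * x = 0 := hx
        rcases mul_eq_zero.1 this with h | h
        · exact absurd h hQne
        · exact h
      rw [hKeq, stmt_finrank_map_eq mulQ _ hinj, stmt_finrank_degreeLT]
      omega
  rw [step1, step2]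
  omega

end
end StmtAuxUni

section StmtAuxMv
open MvPolynomial

noncomputable section


lemma stmt_finsupp_degree (u : Fin 2 →₀ ℕ) : u.degree = u 0 + u 1 := by
  rw [Finsupp.degree_apply]
  rw [Finset.sum_subset (Finset.subset_univ u.support)]
  · rw [Fin.sum_univ_two]
  · intro i _ hi
    simpa using (Finsupp.notMem_support_iff.1 hi)

lemma stmt_monomial_fin2 (u : Fin 2 →₀ ℕ) (a : ℝ) :
    (monomial u a : MvPolynomial (Fin 2) ℝ) = C a * X 0 ^ (u 0) * X 1 ^ (u 1) := by
  rw [monomial_eq]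
  rw [Finsupp.prod_fintype _ _ (fun i => pow_zero _)]
  rw [Fin.prod_univ_two, mul_assoc]

/-- Homogeneous component of a product with a homogeneous polynomial. -/
lemma stmt_homogeneousComponent_mul (p g : MvPolynomial (Fin 2) ℝ) (e m : ℕ)
    (hg : g ∈ homogeneousSubmodule (Fin 2) ℝ e) (he : e ≤ m) :
    homogeneousComponent m (p * g) = homogeneousComponent (m - e) p * g := by
  conv_lhs => rw [← sum_homogeneousComponent p]
  rw [Finset.sum_mul, map_sum]
  have hterm : ∀ a : ℕ, homogeneousComponent m (homogeneousComponent a p * g)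
      = if m = a + e then homogeneousComponent a p * g else 0 := by
    intro a
    refine homogeneousComponent_of_mem ?_
    rw [mem_homogeneousSubmodule]
    exact (homogeneousComponent_isHomogeneous a p).mul ((mem_homogeneousSubmodule _ _).1 hg)
  calc ∑ a ∈ Finset.range (p.totalDegree + 1), homogeneousComponent m (homogeneousComponent a p * g)
      = ∑ a ∈ Finset.range (p.totalDegree + 1), if m = a + e then homogeneousComponent a p * g else 0 := by
        exact Finset.sum_congr rfl fun a _ => hterm a
    _ = homogeneousComponent (m - e) p * g := by
        rw [Finset.sum_eq_single (m - e)]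
        · rw [if_pos (by omega)]
        · intro b _ hbne
          rw [if_neg (by omega)]
        · intro hnotmem
          rw [if_pos (by omega)]
          have : p.totalDegree < m - e := by
            simp only [Finset.mem_range] at hnotmem
            omega
          rw [homogeneousComponent_eq_zero _ _ this, zero_mul]

/-- The degree-`d` part of `J` equals the span of the obvious generators. -/
lemma stmt_span_eq (s r d : ℕ) (hd : r + 1 ≤ d) (c : Fin s → ℝ)
    (J : Ideal (MvPolynomial (Fin 2) ℝ))
    (hJ : J = Ideal.span (Set.range fun i : Fin s => (X 0 + C (c i) * X 1) ^ (r + 1))) :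
    Submodule.restrictScalars ℝ J ⊓ homogeneousSubmodule (Fin 2) ℝ d
      = Submodule.span ℝ (Set.range (fun ik : Fin s × Fin (d - r) =>
          (X 0 + C (c ik.1) * X 1) ^ (r + 1) * (X 0 ^ (d - (r+1) - (ik.2:ℕ)) * X 1 ^ (ik.2:ℕ)))) := by
  have hl_hom : ∀ i : Fin s, ((X 0 + C (c i) * X 1 : MvPolynomial (Fin 2) ℝ) ^ (r+1)).IsHomogeneous (r+1) := by
    intro i
    have h1 : (X 0 + C (c i) * X 1 : MvPolynomial (Fin 2) ℝ).IsHomogeneous 1 :=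
      (isHomogeneous_X _ 0).add (isHomogeneous_C_mul_X (c i) 1)
    simpa using h1.pow (r+1)
  apply le_antisymm
  · rintro f ⟨hfJ, hfhom⟩
    have hfJ' : f ∈ Ideal.span (Set.range fun i : Fin s => (X 0 + C (c i) * X 1) ^ (r + 1)) := by
      rwa [← hJ]
    rw [Ideal.mem_span_range_iff_exists_fun] at hfJ'
    obtain ⟨qf, hqf⟩ := hfJ'
    have hf : f = ∑ i : Fin s,
        homogeneousComponent (d - (r+1)) (qf i) * (X 0 + C (c i) * X 1) ^ (r + 1) := by
      have h1 : homogeneousComponent d f = f := by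
        rw [homogeneousComponent_of_mem hfhom, if_pos rfl]
      calc f = homogeneousComponent d f := h1.symm
        _ = homogeneousComponent d (∑ i : Fin s, qf i * (X 0 + C (c i) * X 1) ^ (r + 1)) := by
            rw [hqf]
        _ = ∑ i : Fin s, homogeneousComponent d (qf i * (X 0 + C (c i) * X 1) ^ (r + 1)) := by
            rw [map_sum]
        _ = _ := by
            refine Finset.sum_congr rfl fun i _ => ?_
            exact stmt_homogeneousComponent_mul (qf i) _ (r+1) d
              ((mem_homogeneousSubmodule _ _).2 (hl_hom i)) hd
    rw [hf]
    refine Submodule.sum_mem _ fun i _ => ?_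
    -- decompose the homogeneous component into monomials
    set p := homogeneousComponent (d - (r+1)) (qf i) with hp
    have hphom : p.IsHomogeneous (d - (r+1)) := homogeneousComponent_isHomogeneous _ _
    rw [p.as_sum, Finset.sum_mul]
    refine Submodule.sum_mem _ fun u hu => ?_
    have hudeg : u.degree = d - (r+1) := by
      by_contra hne
      exact (MvPolynomial.mem_support_iff.1 hu) (hphom.coeff_eq_zero hne)
    rw [stmt_finsupp_degree] at hudeg
    have hu1 : u 1 < d - r := by omega
    have hu0 : u 0 = d - (r+1) - u 1 := by omega
    rw [stmt_monomial_fin2]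
    have hgen : (X (0 : Fin 2) + C (c i) * X 1) ^ (r + 1) * (X 0 ^ (d - (r+1) - u 1) * X 1 ^ (u 1))
        ∈ Submodule.span ℝ (Set.range (fun ik : Fin s × Fin (d - r) =>
          (X (0 : Fin 2) + C (c ik.1) * X 1) ^ (r + 1) * (X 0 ^ (d - (r+1) - (ik.2:ℕ)) * X 1 ^ (ik.2:ℕ)))) :=
      Submodule.subset_span ⟨(i, ⟨u 1, hu1⟩), rfl⟩
    have hmem := Submodule.smul_mem _ (coeff u p) hgen
    convert hmem using 1
    rw [smul_eq_C_mul, hu0]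
    ring
  · rw [Submodule.span_le]
    rintro _ ⟨ik, rfl⟩
    refine ⟨?_, ?_⟩
    · show _ ∈ J
      rw [hJ]
      exact Ideal.mul_mem_right _ _ (Ideal.subset_span ⟨ik.1, rfl⟩)
    · show _ ∈ homogeneousSubmodule (Fin 2) ℝ d
      rw [mem_homogeneousSubmodule]
      have h2 : (X 0 ^ (d - (r+1) - (ik.2:ℕ)) * X 1 ^ (ik.2:ℕ) : MvPolynomial (Fin 2) ℝ).IsHomogeneous
          ((d - (r+1) - (ik.2:ℕ)) + (ik.2:ℕ)) :=
        (isHomogeneous_X_pow 0 _).mul (isHomogeneous_X_pow 1 _)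
      have := (hl_hom ik.1).mul h2
      have harith : (r+1) + ((d - (r+1) - (ik.2:ℕ)) + (ik.2:ℕ)) = d := by
        have := ik.2.2
        omega
      rwa [harith] at this


/-- Substitution `x ↦ 1`, `y ↦ X` is injective on homogeneous polynomials of degree `d`. -/
lemma stmt_psi_inj (d : ℕ) (f : MvPolynomial (Fin 2) ℝ)
    (hf : f ∈ homogeneousSubmodule (Fin 2) ℝ d)
    (h0 : aeval (fun i : Fin 2 => if i = 0 then (1 : Polynomial ℝ) else Polynomial.X) f = 0) :
    f = 0 := by
  by_contra hne
  obtain ⟨u0, hu0⟩ := (support_nonempty.2 hne)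
  have hhom : f.IsHomogeneous d := (mem_homogeneousSubmodule _ _).1 hf
  have hdeg : ∀ v ∈ f.support, v 0 + v 1 = d := by
    intro v hv
    have : v.degree = d := by
      by_contra hvne
      exact (mem_support_iff.1 hv) (hhom.coeff_eq_zero hvne)
    rwa [stmt_finsupp_degree] at this
  have hΨ : aeval (fun i : Fin 2 => if i = 0 then (1 : Polynomial ℝ) else Polynomial.X) f
      = ∑ v ∈ f.support, Polynomial.C (coeff v f) * Polynomial.X ^ (v 1) := by
    conv_lhs => rw [f.as_sum]
    rw [map_sum]
    refine Finset.sum_congr rfl fun v _ => ?_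
    rw [stmt_monomial_fin2, map_mul, map_mul, map_pow, map_pow, aeval_X, aeval_X, aeval_C]
    simp [Polynomial.algebraMap_eq]
  have hcoeff : (aeval (fun i : Fin 2 => if i = 0 then (1 : Polynomial ℝ) else Polynomial.X) f).coeff (u0 1)
      = coeff u0 f := by
    rw [hΨ, Polynomial.finset_sum_coeff]
    rw [Finset.sum_eq_single u0]
    · rw [Polynomial.coeff_C_mul, Polynomial.coeff_X_pow, if_pos rfl, mul_one]
    · intro v hv hvne
      rw [Polynomial.coeff_C_mul, Polynomial.coeff_X_pow, if_neg, mul_zero]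
      intro heq
      refine hvne (Finsupp.ext (Fin.forall_fin_two.2 ⟨?_, heq.symm⟩))
      have h1 := hdeg v hv
      have h2 := hdeg u0 hu0
      omega
    · intro h
      exact absurd hu0 h
  rw [h0] at hcoeff
  simp only [Polynomial.coeff_zero] at hcoeff
  exact (mem_support_iff.1 hu0) hcoeff.symm

theorem stmt_4x (s r : ℕ) (hs : 2 ≤ s) (c : Fin s → ℝ) (hc : Function.Injective c)
    (J : Ideal (MvPolynomial (Fin 2) ℝ))
    (hJ : J = Ideal.span (Set.range fun i : Fin s => (X 0 + C (c i) * X 1) ^ (r + 1)))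
    (d : ℕ) (hd : r + 1 ≤ d) :
    Module.finrank ℝ
      ↥(Submodule.restrictScalars ℝ J ⊓ homogeneousSubmodule (Fin 2) ℝ d)
      = min (d + 1) (s * (d - r)) := by
  classical
  rw [stmt_span_eq s r d hd c J hJ]
  set G₂ : Fin s × Fin (d - r) → MvPolynomial (Fin 2) ℝ := fun ik =>
    (X 0 + C (c ik.1) * X 1) ^ (r + 1) * (X 0 ^ (d - (r+1) - (ik.2:ℕ)) * X 1 ^ (ik.2:ℕ)) with hG₂
  set Ψ : MvPolynomial (Fin 2) ℝ →ₐ[ℝ] Polynomial ℝ :=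
    aeval (fun i : Fin 2 => if i = 0 then (1 : Polynomial ℝ) else Polynomial.X) with hΨdef
  have hle : Submodule.span ℝ (Set.range G₂) ≤ homogeneousSubmodule (Fin 2) ℝ d := by
    rw [← stmt_span_eq s r d hd c J hJ]
    exact inf_le_right
  have h1 : Module.finrank ℝ (Submodule.span ℝ (Set.range G₂))
      = Module.finrank ℝ ((Submodule.span ℝ (Set.range G₂)).map Ψ.toLinearMap) :=
    (stmt_finrank_map_eq Ψ.toLinearMap _ fun x hx hx0 => stmt_psi_inj d x (hle hx) hx0).symm
  have h2 : (Submodule.span ℝ (Set.range G₂)).map Ψ.toLinearMap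
      = Submodule.span ℝ (Set.range (fun ik : Fin s × Fin (d-r) =>
          (1 + Polynomial.C (c ik.1) * Polynomial.X)^(r+1) * Polynomial.X^(ik.2 : ℕ))) := by
    rw [Submodule.map_span, ← Set.range_comp]
    have hfun : (⇑Ψ.toLinearMap ∘ G₂) = (fun ik : Fin s × Fin (d-r) =>
        (1 + Polynomial.C (c ik.1) * Polynomial.X)^(r+1) * Polynomial.X^(ik.2 : ℕ)) := by
      funext ik
      show Ψ (G₂ ik) = _
      rw [hG₂, hΨdef]
      simp only [map_mul, map_pow, map_add, aeval_X, aeval_C, Polynomial.algebraMap_eq]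
      norm_num
    rw [hfun]
  rw [h1, h2, stmt_univar_rank s r d hd c hc]

end
end StmtAuxMv

open MvPolynomial

/-- For distinct reals `c₁, …, c_s` (`s ≥ 2`), `r ≥ 0`, and
`J = ⟨(x+c₁y)^{r+1}, …, (x+c_sy)^{r+1}⟩ ⊆ ℝ[x,y]`, for every `d ≥ r+1` the dimension of the
degree-`d` graded piece `J_d` equals `min (d+1) (s(d-r))`. -/
theorem stmt_4 (s r : ℕ) (hs : 2 ≤ s) (c : Fin s → ℝ) (hc : Function.Injective c)
    (J : Ideal (MvPolynomial (Fin 2) ℝ))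
    (hJ : J = Ideal.span (Set.range fun i : Fin s => (X 0 + C (c i) * X 1) ^ (r + 1)))
    (d : ℕ) (hd : r + 1 ≤ d) :
    Module.finrank ℝ
      ↥(Submodule.restrictScalars ℝ J ⊓ homogeneousSubmodule (Fin 2) ℝ d)
      = min (d + 1) (s * (d - r)) := by
  exact stmt_4x s r hs c hc J hJ d hd
end

section
/- Let c₁, …, c_s be distinct real numbers with s ≥ 2, let d, r be integers with d ≥ r+1 and s(d−r) ≤ d+1. Index the (d+1) × (d−r) matrices A_i (for i = 1,…,s) by (A_i)_{j,k} = C(d−k, j−k) c_i^{j−k} for 0 ≤ k ≤ d−r−1, 0 ≤ j ≤ d (with the convention C(n,m) = 0 if m < 0 or m > n), and let A = [A₁ | A₂ | … | A_s]. Then the submatrix of A formed by its first s(d−r) rows is invertible. -/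
open Polynomial

private lemma choose_descFactorial_key {d j k : ℕ} (hj : j ≤ d) (hk : k ≤ j) :
    d.choose j * j.descFactorial k = d.descFactorial k * (d - k).choose (j - k) := by
  rw [Nat.descFactorial_eq_factorial_mul_choose, Nat.descFactorial_eq_factorial_mul_choose]
  calc d.choose j * (Nat.factorial k * j.choose k)
      = Nat.factorial k * (d.choose j * j.choose k) := by ring
    _ = Nat.factorial k * (d.choose k * (d - k).choose (j - k)) := by rw [Nat.choose_mul hk]
    _ = Nat.factorial k * d.choose k * (d - k).choose (j - k) := by ring

/-- Distinct reals `c₁, …, c_s` (`s ≥ 2`), integers `d ≥ r+1` with `s(d-r) ≤ d+1`.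
The `(d+1) × (d-r)` matrices `A_i` have entries `(A_i)_{j,k} = C(d-k, j-k) c_i^{j-k}`
(zero when `j < k`, and `C(n,m) = 0` for `m > n`), and `A = [A₁ | ⋯ | A_s]`, whose column
indexed by `col` (`0 ≤ col < s(d-r)`) is column `k = col % (d-r)` of `A_i` with
`i = col / (d-r)`.  The submatrix formed by the first `s(d-r)` rows of `A` is invertible. -/
theorem stmt_5 (s r d : ℕ) (hs : 2 ≤ s) (hd : r + 1 ≤ d) (hsd : s * (d - r) ≤ d + 1)
    (c : ℕ → ℝ) (hc : Set.InjOn c (Set.Iio s))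
    (A : Matrix (Fin (s * (d - r))) (Fin (s * (d - r))) ℝ)
    (hA : ∀ j col : Fin (s * (d - r)),
      A j col =
        if (j : ℕ) < (col : ℕ) % (d - r) then 0
        else (Nat.choose (d - (col : ℕ) % (d - r)) ((j : ℕ) - (col : ℕ) % (d - r)) : ℝ) *
          c ((col : ℕ) / (d - r)) ^ ((j : ℕ) - (col : ℕ) % (d - r))) :
    IsUnit A.det := by
  have he : 0 < d - r := by omega
  rw [isUnit_iff_ne_zero]
  intro hdet0
  obtain ⟨v, hv0, hv⟩ := (Matrix.exists_vecMul_eq_zero_iff).2 hdet0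
  -- the polynomial p = ∑ v_j C(d,j) X^j
  set p : ℝ[X] := ∑ j : Fin (s * (d - r)), C (v j * (d.choose (j : ℕ) : ℝ)) * X ^ (j : ℕ)
    with hp_def
  -- derivatives of p vanish at each c i to order d - r
  have key : ∀ i < s, ∀ k < d - r, (derivative^[k] p).eval (c i) = 0 := by
    intro i hi k hk
    have hcol : i * (d - r) + k < s * (d - r) := by
      calc i * (d - r) + k < i * (d - r) + (d - r) := by omega
        _ = (i + 1) * (d - r) := by ring
        _ ≤ s * (d - r) := Nat.mul_le_mul_right (d - r) hi
    set col : Fin (s * (d - r)) := ⟨i * (d - r) + k, hcol⟩ with hcol_def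
    have hmod : (col : ℕ) % (d - r) = k := by
      show (i * (d - r) + k) % (d - r) = k
      rw [Nat.mul_comm, Nat.mul_add_mod, Nat.mod_eq_of_lt hk]
    have hdiv : (col : ℕ) / (d - r) = i := by
      show (i * (d - r) + k) / (d - r) = i
      rw [Nat.mul_comm, Nat.mul_add_div he, Nat.div_eq_of_lt hk, Nat.add_zero]
    have hzero : ∑ j : Fin (s * (d - r)), v j * A j col = 0 := by
      have := congrFun hv col
      simpa [Matrix.vecMul, dotProduct] using this
    have heval : (derivative^[k] p).eval (c i)
        = ∑ j : Fin (s * (d - r)), v j * (d.choose (j : ℕ) : ℝ) *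
            ((j : ℕ).descFactorial k : ℝ) * (c i) ^ ((j : ℕ) - k) := by
      rw [hp_def, iterate_derivative_sum, eval_finset_sum]
      refine Finset.sum_congr rfl fun j _ => ?_
      rw [iterate_derivative_C_mul, iterate_derivative_X_pow_eq_natCast_mul]
      simp only [eval_mul, eval_C, eval_pow, eval_X, eval_natCast]
      ring
    have hterm : ∀ j : Fin (s * (d - r)),
        v j * (d.choose (j : ℕ) : ℝ) * ((j : ℕ).descFactorial k : ℝ) * (c i) ^ ((j : ℕ) - k)
          = (d.descFactorial k : ℝ) * (v j * A j col) := by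
      intro j
      rw [hA j col, hmod, hdiv]
      by_cases hjk : (j : ℕ) < k
      · simp [hjk, Nat.descFactorial_eq_zero_iff_lt.2 hjk]
      · push_neg at hjk
        rw [if_neg (by omega)]
        have hjd : (j : ℕ) ≤ d := by
          have h1 := j.isLt
          omega
        have hnat := choose_descFactorial_key (d := d) (j := (j : ℕ)) (k := k) hjd hjk
        have hcast : (d.choose (j : ℕ) : ℝ) * ((j : ℕ).descFactorial k : ℝ)
            = (d.descFactorial k : ℝ) * ((d - k).choose ((j : ℕ) - k) : ℝ) := by
          exact_mod_cast congrArg (Nat.cast : ℕ → ℝ) hnat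
        calc v j * (d.choose (j : ℕ) : ℝ) * ((j : ℕ).descFactorial k : ℝ) * (c i) ^ ((j : ℕ) - k)
            = v j * ((d.choose (j : ℕ) : ℝ) * ((j : ℕ).descFactorial k : ℝ))
                * (c i) ^ ((j : ℕ) - k) := by ring
          _ = v j * ((d.descFactorial k : ℝ) * ((d - k).choose ((j : ℕ) - k) : ℝ))
                * (c i) ^ ((j : ℕ) - k) := by rw [hcast]
          _ = (d.descFactorial k : ℝ) *
                (v j * (((d - k).choose ((j : ℕ) - k) : ℝ) * (c i) ^ ((j : ℕ) - k))) := by ring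
    rw [heval]
    calc (∑ j : Fin (s * (d - r)), v j * (d.choose (j : ℕ) : ℝ) *
            ((j : ℕ).descFactorial k : ℝ) * (c i) ^ ((j : ℕ) - k))
        = ∑ j : Fin (s * (d - r)), (d.descFactorial k : ℝ) * (v j * A j col) :=
          Finset.sum_congr rfl fun j _ => hterm j
      _ = (d.descFactorial k : ℝ) * ∑ j : Fin (s * (d - r)), v j * A j col := by
          rw [Finset.mul_sum]
      _ = 0 := by rw [hzero, mul_zero]
  -- p must be 0
  have hp0 : p = 0 := by
    by_contra hp_ne
    have hdvd : (∏ i ∈ Finset.range s, (X - C (c i)) ^ (d - r)) ∣ p := by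
      refine Finset.prod_dvd_of_coprime ?_ ?_
      · intro a ha b hb hab
        refine (Polynomial.isCoprime_X_sub_C_of_isUnit_sub ?_).pow
        have : c a ≠ c b := fun hcc => hab (hc (Finset.mem_range.1 (by simpa using ha))
          (Finset.mem_range.1 (by simpa using hb)) hcc)
        exact (sub_ne_zero_of_ne this).isUnit
      · intro i hi
        have hi' : i < s := Finset.mem_range.1 hi
        have hmult : d - r - 1 < p.rootMultiplicity (c i) := by
          apply Polynomial.lt_rootMultiplicity_of_isRoot_iterate_derivative hp_ne
          intro m hm
          exact key i hi' m (by omega)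
        calc (X - C (c i)) ^ (d - r) ∣ (X - C (c i)) ^ (p.rootMultiplicity (c i)) :=
              pow_dvd_pow _ (by omega)
          _ ∣ p := Polynomial.pow_rootMultiplicity_dvd p (c i)
    have hdeg_q : (∏ i ∈ Finset.range s, (X - C (c i)) ^ (d - r)).natDegree = s * (d - r) := by
      rw [Polynomial.natDegree_prod]
      · simp [Polynomial.natDegree_pow, mul_comm]
      · intro i _
        exact pow_ne_zero _ (Polynomial.X_sub_C_ne_zero (c i))
    have hdeg_p : p.natDegree < s * (d - r) := by
      have hle : p.natDegree ≤ s * (d - r) - 1 := by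
        rw [hp_def]
        refine Polynomial.natDegree_sum_le_of_forall_le _ _ fun j _ => ?_
        calc (C (v j * (d.choose (j : ℕ) : ℝ)) * X ^ (j : ℕ)).natDegree
            ≤ (j : ℕ) := Polynomial.natDegree_C_mul_X_pow_le _ _
          _ ≤ s * (d - r) - 1 := by have := j.isLt; omega
      have hse : 0 < s * (d - r) := by positivity
      omega
    have := Polynomial.natDegree_le_of_dvd hdvd hp_ne
    omega
  -- extract coefficients: v = 0
  apply hv0
  funext j0
  have hcoeff : p.coeff (j0 : ℕ) = v j0 * (d.choose (j0 : ℕ) : ℝ) := by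
    rw [hp_def, Polynomial.finset_sum_coeff, Finset.sum_eq_single j0]
    · rw [Polynomial.coeff_C_mul, Polynomial.coeff_X_pow, if_pos rfl, mul_one]
    · intro j _ hj
      have hne : (j0 : ℕ) ≠ (j : ℕ) := fun h => hj (Fin.ext h.symm)
      rw [Polynomial.coeff_C_mul, Polynomial.coeff_X_pow, if_neg hne, mul_zero]
    · intro h
      exact absurd (Finset.mem_univ j0) h
  rw [hp0] at hcoeff
  simp only [Polynomial.coeff_zero] at hcoeff
  have hjd : (j0 : ℕ) ≤ d := by
    have h1 := j0.isLt
    omega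
  have hch : (d.choose (j0 : ℕ) : ℝ) ≠ 0 := by
    exact_mod_cast (Nat.choose_pos hjd).ne'
  simp only [Pi.zero_apply]
  rcases mul_eq_zero.1 hcoeff.symm with h | h
  · exact h
  · exact absurd h hch
end

section
/- Let r ≥ 0 and a ≥ 3 be integers, and let M ⊆ ℝ[x,z] be the monomial ideal generated by x^{r+1} together with x^{r−j(a−2)−m} z^{j(a−1)+1+m} for all integers j ≥ 0 and 0 ≤ m ≤ a−3 with r − j(a−2) − m ≥ 0, and z^{r+1+⌊r/(a−2)⌋}. Then the colon ideal (M : z^{r+1}) is the monomial ideal generated by x^{n} and the monomials x^{i} z^{max(0, λ_i − r − 1)} for 0 ≤ i < n, where n = ⌊(r+1)/(a−1)⌋ and λ_i denotes the least exponent t such that x^i z^t ∈ M. -/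
open MvPolynomial

/-- Let `r ≥ 0`, `a ≥ 3`, and let `M ⊆ ℝ[x,z]` (with `x = X 0`, `z = X 1`) be the monomial
ideal generated by `x^{r+1}`, `z^{r+1+⌊r/(a-2)⌋}`, and the monomials
`x^{r-j(a-2)-m} z^{j(a-1)+1+m}` for `j ≥ 0`, `0 ≤ m ≤ a-3` with `r - j(a-2) - m ≥ 0`.
With `n = ⌊(r+1)/(a-1)⌋` and `λ_i` the least `t` with `x^i z^t ∈ M`, the colon ideal
`(M : z^{r+1})` is generated by `x^n` together with `x^i z^{max(0, λ_i - r - 1)}` for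
`0 ≤ i < n`. -/
theorem stmt_8 (r a : ℕ) (ha : 3 ≤ a)
    (M : Ideal (MvPolynomial (Fin 2) ℝ))
    (hM : M = Ideal.span
      ({X 0 ^ (r + 1), X 1 ^ (r + 1 + r / (a - 2))} ∪
        {p | ∃ j m : ℕ, m ≤ a - 3 ∧ j * (a - 2) + m ≤ r ∧
          p = X 0 ^ (r - (j * (a - 2) + m)) * X 1 ^ (j * (a - 1) + 1 + m)}))
    (lam : ℕ → ℕ)
    (hlam : ∀ i, lam i = sInf {t : ℕ | (X 0 : MvPolynomial (Fin 2) ℝ) ^ i * X 1 ^ t ∈ M}) :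
    Submodule.colon M ((Ideal.span {X 1 ^ (r + 1)} : Ideal (MvPolynomial (Fin 2) ℝ)) : Set (MvPolynomial (Fin 2) ℝ))
      = Ideal.span ({X 0 ^ ((r + 1) / (a - 1))} ∪
          {p | ∃ i : ℕ, i < (r + 1) / (a - 1) ∧ p = X 0 ^ i * X 1 ^ (lam i - (r + 1))}) := by
  set n := (r + 1) / (a - 1) with hn
  -- basic monomial rewriting
  have hmono : ∀ e f : ℕ, (X 0 : MvPolynomial (Fin 2) ℝ) ^ e * X 1 ^ f
      = monomial (Finsupp.single 0 e + Finsupp.single 1 f) (1 : ℝ) := by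
    intro e f
    rw [X_pow_eq_monomial, X_pow_eq_monomial, monomial_mul, one_mul]
  have hdecomp : ∀ d : Fin 2 →₀ ℕ,
      d = Finsupp.single 0 (d 0) + Finsupp.single 1 (d 1) := by
    intro d; ext i; fin_cases i <;> simp [Finsupp.single_apply]
  have hle : ∀ (e f : ℕ) (d : Fin 2 →₀ ℕ),
      (Finsupp.single 0 e + Finsupp.single 1 f ≤ d) ↔ (e ≤ d 0 ∧ f ≤ d 1) := by
    intro e f d
    rw [Finsupp.le_def]
    constructor
    · intro h
      constructor
      · have := h 0; simpa using this
      · have := h 1; simpa using this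
    · intro h i
      fin_cases i <;> simp [Finsupp.single_apply] <;> omega
  -- the exponent set of the generators of M
  set S : Set (Fin 2 →₀ ℕ) :=
    ({Finsupp.single 0 (r + 1), Finsupp.single 1 (r + 1 + r / (a - 2))} ∪
      {s | ∃ j m : ℕ, m ≤ a - 3 ∧ j * (a - 2) + m ≤ r ∧
        s = Finsupp.single 0 (r - (j * (a - 2) + m))
          + Finsupp.single 1 (j * (a - 1) + 1 + m)}) with hS
  have hMS : M = Ideal.span ((fun s => monomial s (1 : ℝ)) '' S) := by
    rw [hM]
    congr 1
    ext p
    simp only [hS, Set.mem_union, Set.mem_insert_iff, Set.mem_singleton_iff,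
      Set.mem_setOf_eq, Set.mem_image]
    constructor
    · rintro ((rfl | rfl) | ⟨j, m, h1, h2, rfl⟩)
      · exact ⟨Finsupp.single 0 (r + 1), Or.inl (Or.inl rfl), (X_pow_eq_monomial).symm⟩
      · exact ⟨Finsupp.single 1 (r + 1 + r / (a - 2)), Or.inl (Or.inr rfl),
          (X_pow_eq_monomial).symm⟩
      · exact ⟨_, Or.inr ⟨j, m, h1, h2, rfl⟩, (hmono _ _).symm⟩
    · rintro ⟨s, (rfl | rfl) | ⟨j, m, h1, h2, rfl⟩, rfl⟩
      · exact Or.inl (Or.inl (X_pow_eq_monomial).symm)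
      · exact Or.inl (Or.inr (X_pow_eq_monomial).symm)
      · exact Or.inr ⟨j, m, h1, h2, (hmono _ _).symm⟩
  have memM : ∀ q : MvPolynomial (Fin 2) ℝ,
      q ∈ M ↔ ∀ d ∈ q.support, ∃ s ∈ S, s ≤ d := by
    intro q; rw [hMS]; exact mem_ideal_span_monomial_image
  have hmonM : ∀ i t : ℕ, ((X 0 : MvPolynomial (Fin 2) ℝ) ^ i * X 1 ^ t ∈ M)
      ↔ ∃ s ∈ S, s ≤ Finsupp.single 0 i + Finsupp.single 1 t := by
    intro i t
    rw [memM, hmono]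
    simp [support_monomial]
  -- z-power generator and nonemptiness of the lambda sets
  have hzgen : (X 1 : MvPolynomial (Fin 2) ℝ) ^ (r + 1 + r / (a - 2)) ∈ M := by
    rw [hM]
    exact Ideal.subset_span (Or.inl (Or.inr rfl))
  have hne : ∀ i : ℕ, {t : ℕ | (X 0 : MvPolynomial (Fin 2) ℝ) ^ i * X 1 ^ t ∈ M}.Nonempty :=
    fun i => ⟨r + 1 + r / (a - 2), Ideal.mul_mem_left M _ hzgen⟩
  have hlam_mem : ∀ i : ℕ, (X 0 : MvPolynomial (Fin 2) ℝ) ^ i * X 1 ^ (lam i) ∈ M := by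
    intro i
    have := Nat.sInf_mem (hne i)
    rwa [← hlam i] at this
  have hlam_le : ∀ i t : ℕ, (X 0 : MvPolynomial (Fin 2) ℝ) ^ i * X 1 ^ t ∈ M → lam i ≤ t := by
    intro i t h
    rw [hlam]
    exact Nat.sInf_le h
  have hxz_mem : ∀ i t : ℕ, lam i ≤ t → (X 0 : MvPolynomial (Fin 2) ℝ) ^ i * X 1 ^ t ∈ M := by
    intro i t hlt
    have heq : (X 0 : MvPolynomial (Fin 2) ℝ) ^ i * X 1 ^ t
        = (X 0 ^ i * X 1 ^ (lam i)) * X 1 ^ (t - lam i) := by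
      rw [mul_assoc, ← pow_add]
      congr 2
      omega
    rw [heq]
    exact Ideal.mul_mem_right _ _ (hlam_mem i)
  -- key arithmetic: a generator x^n z^e with e ≤ r+1
  have key : ∃ j m : ℕ, m ≤ a - 3 ∧ j * (a - 2) + m ≤ r ∧
      r - (j * (a - 2) + m) = n ∧ j * (a - 1) + 1 + m ≤ r + 1 := by
    clear_value n
    obtain ⟨ρ, hρlt, hdm⟩ : ∃ ρ, ρ < a - 1 ∧ (a - 1) * n + ρ = r + 1 :=
      ⟨(r + 1) % (a - 1), Nat.mod_lt _ (by omega),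
        by rw [hn]; exact Nat.div_add_mod (r + 1) (a - 1)⟩
    have hmul6 : n * (a - 1) = n * (a - 2) + n := by
      have h : a - 1 = (a - 2) + 1 := by omega
      rw [h, Nat.mul_succ]
    have hdm' : n * (a - 2) + n + ρ = r + 1 := by
      rw [Nat.mul_comm (a - 1) n, hmul6] at hdm
      omega
    rcases Nat.eq_zero_or_pos ρ with h0 | h1
    · -- ρ = 0, use j = n - 1, m = a - 3
      have hn1 : 1 ≤ n := by
        by_contra h
        have hn0 : n = 0 := by omega
        rw [hn0, Nat.zero_mul] at hdm'
        omega
      have hsucc : n - 1 + 1 = n := by omega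
      have hj2 : (n - 1) * (a - 2) + (a - 2) = n * (a - 2) := by
        conv_rhs => rw [← hsucc]
        rw [Nat.add_mul, Nat.one_mul]
      have hj1 : (n - 1) * (a - 1) + (a - 1) = n * (a - 2) + n := by
        rw [← hmul6]
        conv_rhs => rw [← hsucc]
        rw [Nat.add_mul, Nat.one_mul]
      refine ⟨n - 1, a - 3, le_refl _, ?_, ?_, ?_⟩ <;> omega
    · -- ρ ≥ 1, use j = n, m = ρ - 1
      refine ⟨n, ρ - 1, ?_, ?_, ?_, ?_⟩ <;> omega
  have hlam_n : lam n ≤ r + 1 := by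
    obtain ⟨j, m, h1, h2, h3, h4⟩ := key
    have hg : (X 0 : MvPolynomial (Fin 2) ℝ) ^ (r - (j * (a - 2) + m))
        * X 1 ^ (j * (a - 1) + 1 + m) ∈ M := by
      rw [hM]
      exact Ideal.subset_span (Or.inr ⟨j, m, h1, h2, rfl⟩)
    rw [h3] at hg
    exact le_trans (hlam_le _ _ hg) h4
  -- RHS as a span of monomials
  have hT : (({X 0 ^ n} : Set (MvPolynomial (Fin 2) ℝ)) ∪
        {p | ∃ i : ℕ, i < n ∧ p = X 0 ^ i * X 1 ^ (lam i - (r + 1))})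
      = (fun s => monomial s (1 : ℝ)) ''
        ({Finsupp.single 0 n} ∪
          {t | ∃ i : ℕ, i < n ∧ t = Finsupp.single 0 i + Finsupp.single 1 (lam i - (r + 1))}) := by
    ext p
    simp only [Set.mem_union, Set.mem_singleton_iff, Set.mem_setOf_eq, Set.mem_image]
    constructor
    · rintro (rfl | ⟨i, hi, rfl⟩)
      · exact ⟨Finsupp.single 0 n, Or.inl rfl, (X_pow_eq_monomial).symm⟩
      · exact ⟨_, Or.inr ⟨i, hi, rfl⟩, (hmono _ _).symm⟩
    · rintro ⟨s, rfl | ⟨i, hi, rfl⟩, rfl⟩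
      · exact Or.inl (X_pow_eq_monomial).symm
      · exact Or.inr ⟨i, hi, (hmono _ _).symm⟩
  apply le_antisymm
  · -- colon ⊆ RHS
    intro p hp
    have hpz : p * X 1 ^ (r + 1) ∈ M := Ideal.mem_colon_span_singleton.mp hp
    rw [hT]
    rw [mem_ideal_span_monomial_image]
    intro d hd
    -- the shifted monomial is in the support of p * z^(r+1)
    have hd' : d + Finsupp.single 1 (r + 1) ∈ (p * X 1 ^ (r + 1)).support := by
      rw [mem_support_iff] at hd ⊢
      rw [X_pow_eq_monomial, coeff_mul_monomial]
      simpa using hd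
    obtain ⟨s, hsS, hsle⟩ := (memM _).mp hpz _ hd'
    have hshift : d + Finsupp.single 1 (r + 1)
        = Finsupp.single 0 (d 0) + Finsupp.single 1 (d 1 + (r + 1)) := by
      conv_lhs => rw [hdecomp d]
      rw [add_assoc, ← Finsupp.single_add]
    have htop : (X 0 : MvPolynomial (Fin 2) ℝ) ^ (d 0) * X 1 ^ (d 1 + (r + 1)) ∈ M := by
      rw [hmonM]
      exact ⟨s, hsS, hshift ▸ hsle⟩
    have hlamd : lam (d 0) ≤ d 1 + (r + 1) := hlam_le _ _ htop
    by_cases hin : n ≤ d 0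
    · exact ⟨Finsupp.single 0 n, Or.inl rfl, Finsupp.single_le_iff.mpr hin⟩
    · refine ⟨Finsupp.single 0 (d 0) + Finsupp.single 1 (lam (d 0) - (r + 1)),
        Or.inr ⟨d 0, by omega, rfl⟩, ?_⟩
      rw [hle]
      exact ⟨le_refl _, by omega⟩
  · -- RHS ⊆ colon
    rw [Ideal.span_le]
    rintro q ((rfl : q = _) | ⟨i, hi, rfl⟩)
    · rw [SetLike.mem_coe, Ideal.mem_colon_span_singleton]
      exact hxz_mem n (r + 1) hlam_n
    · rw [SetLike.mem_coe, Ideal.mem_colon_span_singleton, mul_assoc, ← pow_add]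
      exact hxz_mem i _ (by omega)
end

section
/- Let I = ⟨x⁴, x³z², y³, y²z, yz², z⁴⟩ in ℝ[x,y,z]. Then the Castelnuovo–Mumford regularity of I equals 5; equivalently the maximal degree of a minimal third syzygy of I is 8. -/
open MvPolynomial Finsupp

/-- The generating set of exponents. -/
private def genSet : Set (MvPolynomial (Fin 3) ℝ) :=
  {X 0 ^ 4, X 0 ^ 3 * X 2 ^ 2, X 1 ^ 3, X 1 ^ 2 * X 2, X 1 * X 2 ^ 2, X 2 ^ 4}

private lemma hom_deg (p : MvPolynomial (Fin 3) ℝ) (d : ℕ) (hp : p.IsHomogeneous d)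
    (m : Fin 3 →₀ ℕ) (hm : m ∈ p.support) : m 0 + m 1 + m 2 = d := by
  have h := hp (MvPolynomial.mem_support_iff.mp hm)
  rw [Finsupp.weight_apply, Finsupp.sum_fintype] at h
  · rw [← h, Fin.sum_univ_three]; simp
  · simp

/-- If a monomial generator `monomial t 1` lies in `I` and `t ≤ s`, then `monomial s r ∈ I`. -/
private lemma mem_of_exp_le {I : Ideal (MvPolynomial (Fin 3) ℝ)} {t s : Fin 3 →₀ ℕ}
    (h : (monomial t 1 : MvPolynomial (Fin 3) ℝ) ∈ I) (hts : t ≤ s) (r : ℝ) :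
    (monomial s r : MvPolynomial (Fin 3) ℝ) ∈ I := by
  have e : (monomial s r : MvPolynomial (Fin 3) ℝ) = monomial (s - t) r * monomial t 1 := by
    rw [monomial_mul, mul_one, tsub_add_cancel_of_le hts]
  rw [e]
  exact Ideal.mul_mem_left _ _ h

private lemma gen1 : (X 0 ^ 4 : MvPolynomial (Fin 3) ℝ) = monomial (single 0 4) 1 := by
  rw [X_pow_eq_monomial]

private lemma gen2 : (X 0 ^ 3 * X 2 ^ 2 : MvPolynomial (Fin 3) ℝ)
    = monomial (single 0 3 + single 2 2) 1 := by
  rw [X_pow_eq_monomial, X_pow_eq_monomial, monomial_mul, mul_one]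

private lemma gen3 : (X 1 ^ 3 : MvPolynomial (Fin 3) ℝ) = monomial (single 1 3) 1 := by
  rw [X_pow_eq_monomial]

private lemma gen4 : (X 1 ^ 2 * X 2 : MvPolynomial (Fin 3) ℝ)
    = monomial (single 1 2 + single 2 1) 1 := by
  rw [X_pow_eq_monomial, ← pow_one (X 2 : MvPolynomial (Fin 3) ℝ), X_pow_eq_monomial,
    monomial_mul, mul_one]

private lemma gen5 : (X 1 * X 2 ^ 2 : MvPolynomial (Fin 3) ℝ)
    = monomial (single 1 1 + single 2 2) 1 := by
  rw [← pow_one (X 1 : MvPolynomial (Fin 3) ℝ), X_pow_eq_monomial, X_pow_eq_monomial,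
    monomial_mul, mul_one]

private lemma gen6 : (X 2 ^ 4 : MvPolynomial (Fin 3) ℝ) = monomial (single 2 4) 1 := by
  rw [X_pow_eq_monomial]

/-- Every monomial of total degree `≥ 6` lies in the span. -/
private lemma monomial_mem (s : Fin 3 →₀ ℕ) (hs : 6 ≤ s 0 + s 1 + s 2) (r : ℝ) :
    (monomial s r : MvPolynomial (Fin 3) ℝ) ∈ Ideal.span genSet := by
  have h1 : (X 0 ^ 4 : MvPolynomial (Fin 3) ℝ) ∈ Ideal.span genSet :=
    Ideal.subset_span (by simp [genSet])
  have h2 : (X 0 ^ 3 * X 2 ^ 2 : MvPolynomial (Fin 3) ℝ) ∈ Ideal.span genSet :=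
    Ideal.subset_span (by simp [genSet])
  have h3 : (X 1 ^ 3 : MvPolynomial (Fin 3) ℝ) ∈ Ideal.span genSet :=
    Ideal.subset_span (by simp [genSet])
  have h4 : (X 1 ^ 2 * X 2 : MvPolynomial (Fin 3) ℝ) ∈ Ideal.span genSet :=
    Ideal.subset_span (by simp [genSet])
  have h5 : (X 1 * X 2 ^ 2 : MvPolynomial (Fin 3) ℝ) ∈ Ideal.span genSet :=
    Ideal.subset_span (by simp [genSet])
  have h6 : (X 2 ^ 4 : MvPolynomial (Fin 3) ℝ) ∈ Ideal.span genSet :=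
    Ideal.subset_span (by simp [genSet])
  rw [gen1] at h1; rw [gen2] at h2; rw [gen3] at h3; rw [gen4] at h4
  rw [gen5] at h5; rw [gen6] at h6
  by_cases c1 : 4 ≤ s 0
  · exact mem_of_exp_le h1 (fun i => by fin_cases i <;> simp [single_apply] <;> omega) r
  by_cases c6 : 4 ≤ s 2
  · exact mem_of_exp_le h6 (fun i => by fin_cases i <;> simp [single_apply] <;> omega) r
  by_cases c3 : 3 ≤ s 1
  · exact mem_of_exp_le h3 (fun i => by fin_cases i <;> simp [single_apply] <;> omega) r
  by_cases c4 : 2 ≤ s 1 ∧ 1 ≤ s 2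
  · exact mem_of_exp_le h4
      (fun i => by fin_cases i <;> simp [single_apply] <;> omega) r
  by_cases c5 : 1 ≤ s 1 ∧ 2 ≤ s 2
  · exact mem_of_exp_le h5
      (fun i => by fin_cases i <;> simp [single_apply] <;> omega) r
  by_cases c2 : 3 ≤ s 0 ∧ 2 ≤ s 2
  · exact mem_of_exp_le h2
      (fun i => by fin_cases i <;> simp [single_apply] <;> omega) r
  · omega

/-- Target exponent `x³y²`. -/
private noncomputable def s0 : Fin 3 →₀ ℕ := single 0 3 + single 1 2

/-- Every element of the span has vanishing coefficients at all `t ≤ s0`. -/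
private lemma coeff_vanish {f : MvPolynomial (Fin 3) ℝ} (hf : f ∈ Ideal.span genSet) :
    ∀ t ≤ s0, MvPolynomial.coeff t f = 0 := by
  refine Submodule.span_induction (p := fun f _ => ∀ t ≤ s0, MvPolynomial.coeff t f = 0)
    ?_ ?_ ?_ ?_ hf
  · intro g hg t ht
    have hle : ∀ u : Fin 3 →₀ ℕ, u ≤ s0 →
        ¬(u = single 0 4 ∨ u = single 0 3 + single 2 2 ∨ u = single 1 3 ∨
          u = single 1 2 + single 2 1 ∨ u = single 1 1 + single 2 2 ∨ u = single 2 4) := by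
      intro u hu hcase
      have h0 := hu 0
      have h1 := hu 1
      have h2 := hu 2
      rcases hcase with h | h | h | h | h | h <;> subst h <;>
        simp [s0, single_apply, Finsupp.add_apply] at h0 h1 h2
    have := hle t ht
    rcases hg with h | h | h | h | h | h <;> subst h
    · rw [gen1, coeff_monomial, if_neg (fun h => this (Or.inl h.symm))]
    · rw [gen2, coeff_monomial, if_neg (fun h => this (Or.inr (Or.inl h.symm)))]
    · rw [gen3, coeff_monomial, if_neg (fun h => this (Or.inr (Or.inr (Or.inl h.symm))))]
    · rw [gen4, coeff_monomial,
        if_neg (fun h => this (Or.inr (Or.inr (Or.inr (Or.inl h.symm)))))]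
    · rw [gen5, coeff_monomial,
        if_neg (fun h => this (Or.inr (Or.inr (Or.inr (Or.inr (Or.inl h.symm))))))]
    · rw [gen6, coeff_monomial,
        if_neg (fun h => this (Or.inr (Or.inr (Or.inr (Or.inr (Or.inr h.symm))))))]
  · intro t _; simp
  · intro a b _ _ ha hb t ht
    rw [MvPolynomial.coeff_add, ha t ht, hb t ht, add_zero]
  · intro r a _ ha t ht
    rw [smul_eq_mul, MvPolynomial.coeff_mul]
    refine Finset.sum_eq_zero fun x hx => ?_
    rw [Finset.HasAntidiagonal.mem_antidiagonal] at hx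
    have hx2 : x.2 ≤ t := hx ▸ le_add_self
    rw [ha x.2 (hx2.trans ht), mul_zero]

/-- Let `I = ⟨x⁴, x³z², y³, y²z, yz², z⁴⟩` in `ℝ[x,y,z]` (with `x = X 0`, `y = X 1`,
`z = X 2`).  The Castelnuovo–Mumford regularity of `I` equals `5`: since `S/I` has finite
length, its regularity is its top nonzero degree, so equivalently `5` is the largest `d`
such that `(S/I)_d ≠ 0`, i.e. such that some homogeneous polynomial of degree `d` lies
outside `I`. -/
theorem stmt_10 (I : Ideal (MvPolynomial (Fin 3) ℝ))
    (hI : I = Ideal.span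
      {X 0 ^ 4, X 0 ^ 3 * X 2 ^ 2, X 1 ^ 3, X 1 ^ 2 * X 2, X 1 * X 2 ^ 2, X 2 ^ 4}) :
    IsGreatest {d : ℕ | ∃ p : MvPolynomial (Fin 3) ℝ, p.IsHomogeneous d ∧ p ∉ I} 5 := by
  have hIg : I = Ideal.span genSet := hI
  constructor
  · -- witness: x³y²
    refine ⟨X 0 ^ 3 * X 1 ^ 2, ?_, ?_⟩
    · have : (3 : ℕ) + 2 = 5 := rfl
      exact this ▸ ((isHomogeneous_X ℝ 0).pow 3).mul ((isHomogeneous_X ℝ 1).pow 2)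
    · intro hmem
      rw [hIg] at hmem
      have h0 := coeff_vanish hmem s0 le_rfl
      have he : (X 0 ^ 3 * X 1 ^ 2 : MvPolynomial (Fin 3) ℝ) = monomial s0 1 := by
        rw [X_pow_eq_monomial, X_pow_eq_monomial, monomial_mul, mul_one, s0]
      rw [he, coeff_monomial, if_pos rfl] at h0
      exact one_ne_zero h0
  · -- upper bound
    rintro d ⟨p, hp, hpI⟩
    by_contra hlt
    push_neg at hlt
    apply hpI
    rw [hIg, ← p.support_sum_monomial_coeff]
    refine Ideal.sum_mem _ fun m hm => ?_
    exact monomial_mem m (by have := hom_deg p d hp m hm; omega) _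
end

section
/- Let p ≥ 1 and let Q = ⟨x^p, x^{p-1}z², x^{p-2}z⁴, …, x z^{2p-2}, z^{2p}⟩ + ⟨y^p, y^{p-1}z², …, y z^{2p-2}⟩ in S = ℝ[x,y,z]. Then S/Q is Artinian (has finite length), and the largest d such that (S/Q)_d ≠ 0 is 2p − 1. -/
open MvPolynomial

private lemma monXX (i j : Fin 3) (a b : ℕ) :
    (X i : MvPolynomial (Fin 3) ℝ) ^ a * X j ^ b
      = monomial (Finsupp.single i a + Finsupp.single j b) (1 : ℝ) := by
  rw [X_pow_eq_monomial, X_pow_eq_monomial, monomial_mul, one_mul]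

private lemma degree_fin3 (u : Fin 3 →₀ ℕ) : u.degree = u 0 + u 1 + u 2 := by
  rw [Finsupp.degree_apply, Finset.sum_subset (Finset.subset_univ _)]
  · exact Fin.sum_univ_three u
  · intro i _ h
    simpa using h

/-- Let `p ≥ 1` and `Q = ⟨x^p, x^{p-1}z², …, xz^{2p-2}, z^{2p}⟩ + ⟨y^p, y^{p-1}z², …,
yz^{2p-2}⟩` in `S = ℝ[x,y,z]` (with `x = X 0`, `y = X 1`, `z = X 2`).  Then `S/Q` is
Artinian (all sufficiently high graded pieces vanish) and the largest `d` with
`(S/Q)_d ≠ 0` is `2p - 1`. -/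
theorem stmt_11 (p : ℕ) (hp : 1 ≤ p) (Q : Ideal (MvPolynomial (Fin 3) ℝ))
    (hQ : Q = Ideal.span
      ({q | ∃ i ≤ p, q = X 0 ^ (p - i) * X 2 ^ (2 * i)} ∪
       {q | ∃ i ≤ p - 1, q = X 1 ^ (p - i) * X 2 ^ (2 * i)})) :
    (∃ N : ℕ, ∀ d ≥ N, ∀ f : MvPolynomial (Fin 3) ℝ, f.IsHomogeneous d → f ∈ Q) ∧
    IsGreatest {d : ℕ | ∃ f : MvPolynomial (Fin 3) ℝ, f.IsHomogeneous d ∧ f ∉ Q}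
      (2 * p - 1) := by
  classical
  -- rewrite Q as a monomial ideal
  set T : Set (Fin 3 →₀ ℕ) :=
    {s | ∃ i ≤ p, s = Finsupp.single 0 (p - i) + Finsupp.single 2 (2 * i)} ∪
    {s | ∃ i ≤ p - 1, s = Finsupp.single 1 (p - i) + Finsupp.single 2 (2 * i)} with hT
  have hQ' : Q = Ideal.span ((fun s => monomial s (1 : ℝ)) '' T) := by
    rw [hQ]
    congr 1
    rw [hT, Set.image_union]
    congr 1
    · ext q
      constructor
      · rintro ⟨i, hi, rfl⟩
        exact ⟨_, ⟨i, hi, rfl⟩, (monXX 0 2 _ _).symm⟩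
      · rintro ⟨s, ⟨i, hi, rfl⟩, rfl⟩
        exact ⟨i, hi, (monXX 0 2 _ _).symm⟩
    · ext q
      constructor
      · rintro ⟨i, hi, rfl⟩
        exact ⟨_, ⟨i, hi, rfl⟩, (monXX 1 2 _ _).symm⟩
      · rintro ⟨s, ⟨i, hi, rfl⟩, rfl⟩
        exact ⟨i, hi, (monXX 1 2 _ _).symm⟩
  have hmem : ∀ f : MvPolynomial (Fin 3) ℝ,
      f ∈ Q ↔ ∀ u ∈ f.support, ∃ s ∈ T, s ≤ u := by
    intro f
    rw [hQ', mem_ideal_span_monomial_image]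
  -- high degree vanishing
  have hhigh : ∀ d ≥ 2 * p, ∀ f : MvPolynomial (Fin 3) ℝ, f.IsHomogeneous d → f ∈ Q := by
    intro d hd f hf
    rw [hmem]
    intro u hu
    have hdeg : u.degree = d := by
      have := hf (mem_support_iff.mp hu)
      rwa [Finsupp.degree_eq_weight_one]
    rw [degree_fin3] at hdeg
    set a := u 0; set b := u 1; set c := u 2
    by_cases h1 : p ≤ a + min p (c / 2)
    · refine ⟨Finsupp.single 0 (p - min p (c / 2)) + Finsupp.single 2 (2 * min p (c / 2)),
        Or.inl ⟨min p (c / 2), min_le_left _ _, rfl⟩, ?_⟩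
      intro j
      fin_cases j <;> simp [Finsupp.single_apply] <;> omega
    · refine ⟨Finsupp.single 1 (p - min (p - 1) (c / 2)) +
        Finsupp.single 2 (2 * min (p - 1) (c / 2)),
        Or.inr ⟨min (p - 1) (c / 2), min_le_left _ _, rfl⟩, ?_⟩
      intro j
      fin_cases j <;> simp [Finsupp.single_apply] <;> omega
  refine ⟨⟨2 * p, hhigh⟩, ?_, ?_⟩
  · -- z^(2p-1) is homogeneous of degree 2p-1 and not in Q
    refine ⟨X 2 ^ (2 * p - 1), ?_, ?_⟩
    · have := isHomogeneous_X (R := ℝ) (i := (2 : Fin 3))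
      simpa using this.pow (2 * p - 1)
    · rw [hmem]
      push_neg
      refine ⟨Finsupp.single 2 (2 * p - 1), ?_, ?_⟩
      · rw [X_pow_eq_monomial, support_monomial]
        simp
      · rintro s (⟨i, hi, rfl⟩ | ⟨i, hi, rfl⟩) hle
        · have h0 := hle 0
          have h2 := hle 2
          simp [Finsupp.single_apply] at h0 h2
          omega
        · have h1 := hle 1
          simp [Finsupp.single_apply] at h1
          omega
  · rintro d ⟨f, hf, hfQ⟩
    by_contra hlt
    push_neg at hlt
    exact hfQ (hhigh d (by omega) f hf)
end

section
/- Let s ≥ 2 and r ≥ 0 be integers. Define the monomial ideal M ⊆ ℝ[x,y] generated by x^{r−j(s−1)−m} y^{js+1+m} for all j ≥ 0 and 0 ≤ m ≤ s−2 with r − j(s−1) − m ≥ 0, together with x^{r+1} and y^{r+1+⌊r/(s−1)⌋}. Then for every d ≥ r+1, the number of monomials of degree d in M equals min(d+1, s(d−r)). -/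
/-!
Write a degree-`d` monomial as `x^i y^(d-i)`. The generator indexed by `(j, m)` has
`y`-degree `j s + 1 + m = (j (s-1) + m) + j + 1`, so it can only divide a degree-`d` monomial
when `j < d - r`, and its `x`-degree `r - (j (s-1) + m)` is then more than `r - (s-1)(d-r)`;
the pure powers `x^(r+1)` and `y^(r+1+⌊r/(s-1)⌋)` obey the same bound.
Conversely, for `i ≤ r` the generator with `j (s-1) + m = r - i` (division with remainder) divides
`x^i y^(d-i)` as soon as `r - i < (s-1)(d-r)`. Hence the degree-`d` monomials of `M` are exactly
those with `r + 1 ≤ i + (s-1)(d-r)`, an interval of exponents of length `min (d+1) (s (d-r))`.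
-/

open scoped Classical

def genExponents (s r : ℕ) : Set (ℕ × ℕ) :=
  {(r + 1, 0), (0, r + 1 + r / (s - 1))} ∪
    {g | ∃ j m : ℕ, m ≤ s - 2 ∧ j * (s - 1) + m ≤ r ∧
      g = (r - (j * (s - 1) + m), j * s + 1 + m)}

section

variable {s r d i : ℕ}

theorem le_add_of_mem_genExponents (hs : 2 ≤ s) {g : ℕ × ℕ} (hg : g ∈ genExponents s r)
    (h₁ : g.1 ≤ i) (h₂ : g.2 ≤ d - i) : r + 1 ≤ i + (s - 1) * (d - r) := by
  rcases hg with (rfl | rfl) | ⟨j, m, hm, -, rfl⟩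
  · exact le_add_right h₁
  · have hq : r < (s - 1) * (r / (s - 1) + 1) := Nat.lt_mul_div_succ r (by omega)
    have hle : (s - 1) * (r / (s - 1) + 1) ≤ (s - 1) * (d - r) :=
      Nat.mul_le_mul_left _ (by simp only at h₂; omega)
    omega
  · simp only at h₁ h₂
    have hjs : j * s = j * (s - 1) + j := by
      rw [← Nat.mul_add_one, Nat.sub_add_cancel (by omega : 1 ≤ s)]
    have hle : (s - 1) * (j + 1) ≤ (s - 1) * (d - r) := Nat.mul_le_mul_left _ (by omega)
    have hexp : (s - 1) * (j + 1) = j * (s - 1) + (s - 1) := by ring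
    omega

theorem exists_mem_genExponents (hs : 2 ≤ s) (hi : i ≤ d)
    (h : r + 1 ≤ i + (s - 1) * (d - r)) :
    ∃ g ∈ genExponents s r, g.1 ≤ i ∧ g.2 ≤ d - i := by
  by_cases hri : r + 1 ≤ i
  · exact ⟨(r + 1, 0), Or.inl (Or.inl rfl), hri, Nat.zero_le _⟩
  obtain ⟨j, m, hdiv, hm⟩ : ∃ j m, j * (s - 1) + m = r - i ∧ m < s - 1 :=
    ⟨_, _, Nat.div_add_mod' (r - i) (s - 1), Nat.mod_lt _ (by omega)⟩
  have hj : j < d - r := by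
    refine Nat.lt_of_mul_lt_mul_right (a := s - 1) ?_
    rw [Nat.mul_comm (d - r)]
    omega
  have hjs : j * s = j * (s - 1) + j := by
    rw [← Nat.mul_add_one, Nat.sub_add_cancel (by omega : 1 ≤ s)]
  exact ⟨(r - (j * (s - 1) + m), j * s + 1 + m), Or.inr ⟨j, m, by omega, by omega, rfl⟩,
    by simp only; omega, by simp only; omega⟩

theorem exists_mem_genExponents_iff (hs : 2 ≤ s) (hi : i ≤ d) :
    (∃ g ∈ genExponents s r, g.1 ≤ i ∧ g.2 ≤ d - i) ↔ r + 1 ≤ i + (s - 1) * (d - r) :=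
  ⟨fun ⟨_, hg, h₁, h₂⟩ => le_add_of_mem_genExponents hs hg h₁ h₂,
    exists_mem_genExponents hs hi⟩

end

theorem Nat.filter_range_le_add_eq_Icc (a b d : ℕ) :
    (Finset.range (d + 1)).filter (fun i => a ≤ i + b) = Finset.Icc (a - b) d := by
  ext i
  simp only [Finset.mem_filter, Finset.mem_range, Finset.mem_Icc]
  omega

theorem stmt_15_general (s r : ℕ) (hs : 2 ≤ s) (G : Set (ℕ × ℕ))
    (hG : G = {(r + 1, 0), (0, r + 1 + r / (s - 1))} ∪
      {g | ∃ j m : ℕ, m ≤ s - 2 ∧ j * (s - 1) + m ≤ r ∧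
        g = (r - (j * (s - 1) + m), j * s + 1 + m)})
    (d : ℕ) :
    ((Finset.range (d + 1)).filter
        (fun i => ∃ g ∈ G, g.1 ≤ i ∧ g.2 ≤ d - i)).card = min (d + 1) (s * (d - r)) := by
  rw [show G = genExponents s r from hG, Finset.filter_congr fun i hi =>
      exists_mem_genExponents_iff hs (Finset.mem_range_succ_iff.mp hi),
    Nat.filter_range_le_add_eq_Icc, Nat.card_Icc]
  rcases Nat.eq_zero_or_pos (d - r) with hdr | hdr
  · rw [hdr, Nat.mul_zero, Nat.mul_zero]
    omega
  · have hsd : s * (d - r) = (s - 1) * (d - r) + (d - r) := by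
      rw [← Nat.succ_mul, Nat.succ_eq_add_one, Nat.sub_add_cancel (by omega : 1 ≤ s)]
    omega

/-- Let `s ≥ 2`, `r ≥ 0`, and let `M ⊆ ℝ[x,y]` be the monomial ideal generated by
`x^{r-j(s-1)-m} y^{js+1+m}` (for `j ≥ 0`, `0 ≤ m ≤ s-2` with `r - j(s-1) - m ≥ 0`),
together with `x^{r+1}` and `y^{r+1+⌊r/(s-1)⌋}`.  Monomials are recorded by their exponent
pairs, `G` being the set of exponent pairs of the generators; a monomial `x^i y^{d-i}` of
degree `d` lies in `M` iff some generator divides it.  Then for every `d ≥ r+1` the number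
of degree-`d` monomials in `M` equals `min (d+1) (s(d-r))`. -/
theorem stmt_15 (s r : ℕ) (hs : 2 ≤ s) (G : Set (ℕ × ℕ))
    (hG : G = {(r + 1, 0), (0, r + 1 + r / (s - 1))} ∪
      {g | ∃ j m : ℕ, m ≤ s - 2 ∧ j * (s - 1) + m ≤ r ∧
        g = (r - (j * (s - 1) + m), j * s + 1 + m)})
    (d : ℕ) (hd : r + 1 ≤ d) :
    ((Finset.range (d + 1)).filter
        (fun i => ∃ g ∈ G, g.1 ≤ i ∧ g.2 ≤ d - i)).card = min (d + 1) (s * (d - r)) :=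
  stmt_15_general s r hs G hG d
end

section
/- Let I be a monomial ideal in ℝ[x,y,z] minimally generated by monomials of the forms x^{i} z^{λ_i} (for i in a set A of nonnegative integers) and y^{j} z^{η_j} (for j in a set B), where the exponents λ and η are strictly decreasing in i and j respectively. If x^{i} y^{j} z^{t} and x^{i'} y^{j} z^{t} are both lcm's of triples of minimal generators corresponding to bounded faces of the Buchberger graph, with i' > i, then the monomial x^{i} z^{t}, if it lies in I, divides lcm(x^{i'} z^{t}, y^{j} z^{t'}) for appropriate t' ≤ t, contradicting minimality; hence no two generators of the third syzygy of I have the same z-degree. -/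
/-- Componentwise divisibility of monomials in three variables, recorded as exponent
vectors in `ℕ × ℕ × ℕ`. -/
def dvd3 (u v : ℕ × ℕ × ℕ) : Prop :=
  u.1 ≤ v.1 ∧ u.2.1 ≤ v.2.1 ∧ u.2.2 ≤ v.2.2

/-- The lcm of two monomials, i.e. the componentwise max of exponent vectors. -/
def lcm3 (u v : ℕ × ℕ × ℕ) : ℕ × ℕ × ℕ :=
  (max u.1 v.1, max u.2.1 v.2.1, max u.2.2 v.2.2)

/-- Two generators form an edge of the Buchberger graph iff no other generator divides
their lcm. -/
def buchEdge (G : Set (ℕ × ℕ × ℕ)) (u v : ℕ × ℕ × ℕ) : Prop :=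
  ∀ w ∈ G, w ≠ u → w ≠ v → ¬ dvd3 w (lcm3 u v)

/-!
The lcm of a bounded face is determined by its `z`-exponent `t`: it is `x^i y^j z^t` with `i`
the least element of `A` such that `λ_i < t` and `j` the least element of `B` such that
`η_j < t`. A face cannot consist of three generators of the same kind, since the middle one
divides the lcm of the outer two. So, up to exchanging `x` and `y`, a face is
`x^a z^{λ_a}, x^b z^{λ_b}, y^j z^{η_j}` with `a < b`, and its lcm is `x^b y^j z^{λ_a}`: the edge
conditions force `η_j < λ_a`, `b` to be the successor of `a` in `A`, and `j` to be the least
element of `B` with `η_j < λ_a`.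
-/

namespace BuchbergerGraph

lemma lcm3_comm (u v : ℕ × ℕ × ℕ) : lcm3 u v = lcm3 v u := sup_comm u v

lemma lcm3_left_comm (u v w : ℕ × ℕ × ℕ) : lcm3 u (lcm3 v w) = lcm3 v (lcm3 u w) :=
  sup_left_comm u v w

lemma buchEdge_comm {G : Set (ℕ × ℕ × ℕ)} {u v : ℕ × ℕ × ℕ} (h : buchEdge G u v) :
    buchEdge G v u := fun w hw hwv hwu => lcm3_comm u v ▸ h w hw hwu hwv

def swap3 (p : ℕ × ℕ × ℕ) : ℕ × ℕ × ℕ := (p.2.1, p.1, p.2.2)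

lemma swap3_injective : Function.Injective swap3 :=
  Function.LeftInverse.injective (g := swap3) fun _ => rfl

lemma dvd3_swap3 {u v : ℕ × ℕ × ℕ} : dvd3 (swap3 u) (swap3 v) ↔ dvd3 u v :=
  and_left_comm

lemma buchEdge_preimage_swap3 {G : Set (ℕ × ℕ × ℕ)} {u v : ℕ × ℕ × ℕ}
    (h : buchEdge G u v) : buchEdge (swap3 ⁻¹' G) (swap3 u) (swap3 v) :=
  fun w hw hwu hwv hd =>
    h (swap3 w) hw (fun e => hwu (congrArg swap3 e)) (fun e => hwv (congrArg swap3 e))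
      ((dvd3_swap3 (u := swap3 w) (v := lcm3 u v)).1 hd)

-- A bounded face of the planar Buchberger graph: a triangle of pairwise adjacent generators.
structure IsFace (G : Set (ℕ × ℕ × ℕ)) (u v w : ℕ × ℕ × ℕ) : Prop where
  mem₁ : u ∈ G
  mem₂ : v ∈ G
  mem₃ : w ∈ G
  ne₁₂ : u ≠ v
  ne₁₃ : u ≠ w
  ne₂₃ : v ≠ w
  edge₁₂ : buchEdge G u v
  edge₁₃ : buchEdge G u w
  edge₂₃ : buchEdge G v w

namespace IsFace

variable {G : Set (ℕ × ℕ × ℕ)} {u v w : ℕ × ℕ × ℕ}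

lemma swap₁₂ (h : IsFace G u v w) : IsFace G v u w :=
  ⟨h.mem₂, h.mem₁, h.mem₃, h.ne₁₂.symm, h.ne₂₃, h.ne₁₃, buchEdge_comm h.edge₁₂, h.edge₂₃,
    h.edge₁₃⟩

lemma swap₂₃ (h : IsFace G u v w) : IsFace G u w v :=
  ⟨h.mem₁, h.mem₃, h.mem₂, h.ne₁₃, h.ne₁₂, h.ne₂₃.symm, h.edge₁₃, h.edge₁₂,
    buchEdge_comm h.edge₂₃⟩

lemma preimage_swap3 (h : IsFace G u v w) :
    IsFace (swap3 ⁻¹' G) (swap3 u) (swap3 v) (swap3 w) :=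
  ⟨h.mem₁, h.mem₂, h.mem₃, swap3_injective.ne h.ne₁₂, swap3_injective.ne h.ne₁₃,
    swap3_injective.ne h.ne₂₃, buchEdge_preimage_swap3 h.edge₁₂,
    buchEdge_preimage_swap3 h.edge₁₃, buchEdge_preimage_swap3 h.edge₂₃⟩

end IsFace

def IsCorner (A B : Set ℕ) (lam eta : ℕ → ℕ) (L : ℕ × ℕ × ℕ) : Prop :=
  IsLeast {i | i ∈ A ∧ lam i < L.2.2} L.1 ∧ IsLeast {j | j ∈ B ∧ eta j < L.2.2} L.2.1

lemma IsCorner.unique {A B : Set ℕ} {lam eta : ℕ → ℕ} {L M : ℕ × ℕ × ℕ}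
    (hL : IsCorner A B lam eta L) (hM : IsCorner A B lam eta M) (hz : L.2.2 = M.2.2) :
    L = M := by
  obtain ⟨hL₁, hL₂⟩ := hL
  obtain ⟨hM₁, hM₂⟩ := hM
  rw [hz] at hL₁ hL₂
  exact Prod.ext (hL₁.unique hM₁) (Prod.ext (hL₂.unique hM₂) hz)

lemma isCorner_swap3_iff {A B : Set ℕ} {lam eta : ℕ → ℕ} {L : ℕ × ℕ × ℕ} :
    IsCorner B A eta lam (swap3 L) ↔ IsCorner A B lam eta L :=
  and_comm

section

variable {A B : Set ℕ} {lam eta : ℕ → ℕ} {G : Set (ℕ × ℕ × ℕ)}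
  (hG : G = {g | ∃ i ∈ A, g = (i, 0, lam i)} ∪ {g | ∃ j ∈ B, g = (0, j, eta j)})
include hG

lemma preimage_swap3_eq :
    swap3 ⁻¹' G = {g | ∃ j ∈ B, g = (j, 0, eta j)} ∪ {g | ∃ i ∈ A, g = (0, i, lam i)} := by
  subst hG
  ext ⟨x, y, z⟩
  simp only [Set.mem_preimage, swap3, Set.mem_union, Set.mem_ofPred_eq, Prod.mk.injEq]
  rw [or_comm]
  simp only [and_left_comm]

lemma mem_of_mem_left {i : ℕ} (hi : i ∈ A) : (i, 0, lam i) ∈ G :=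
  hG ▸ Or.inl ⟨i, hi, rfl⟩

lemma mem_of_mem_right {j : ℕ} (hj : j ∈ B) : (0, j, eta j) ∈ G :=
  hG ▸ Or.inr ⟨j, hj, rfl⟩

lemma eq_or_eq_of_mem {g : ℕ × ℕ × ℕ} (hg : g ∈ G) :
    (∃ i ∈ A, g = (i, 0, lam i)) ∨ ∃ j ∈ B, g = (0, j, eta j) := by
  rwa [hG] at hg

lemma not_buchEdge_of_lt_of_lt (hlam : StrictAntiOn lam A) {a b c : ℕ} (ha : a ∈ A)
    (hb : b ∈ A) (hab : a < b) (hbc : b < c) : ¬ buchEdge G (a, 0, lam a) (c, 0, lam c) :=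
  fun e =>
  have := hlam ha hb hab
  e (b, 0, lam b) (mem_of_mem_left hG hb) (by simp only [ne_eq, Prod.mk.injEq]; omega)
    (by simp only [ne_eq, Prod.mk.injEq]; omega) (by simp only [dvd3, lcm3]; omega)

lemma not_isFace_of_lt (hlam : StrictAntiOn lam A) {a b c : ℕ} (ha : a ∈ A) (hb : b ∈ A)
    (hc : c ∈ A) (hab : a < b) : ¬ IsFace G (a, 0, lam a) (b, 0, lam b) (c, 0, lam c) := by
  intro h
  rcases lt_trichotomy c a with hca | rfl | hac
  · exact not_buchEdge_of_lt_of_lt hG hlam hc ha hca hab (buchEdge_comm h.edge₂₃)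
  · exact h.ne₁₃ rfl
  rcases lt_trichotomy c b with hcb | rfl | hbc
  · exact not_buchEdge_of_lt_of_lt hG hlam ha hc hac hcb h.edge₁₂
  · exact h.ne₂₃ rfl
  · exact not_buchEdge_of_lt_of_lt hG hlam ha hb hab hbc h.edge₁₃

lemma isLeast_of_buchEdge_left (hlam : StrictAntiOn lam A) {a b : ℕ} (ha : a ∈ A)
    (hb : b ∈ A) (hab : a < b) (e : buchEdge G (a, 0, lam a) (b, 0, lam b)) :
    IsLeast {i | i ∈ A ∧ lam i < lam a} b := by
  refine ⟨⟨hb, hlam ha hb hab⟩, fun k ⟨hk, hka⟩ => ?_⟩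
  by_contra! hkb
  have hak : a < k := (hlam.lt_iff_gt hk ha).1 hka
  exact not_buchEdge_of_lt_of_lt hG hlam ha hk hak hkb e

lemma isLeast_of_buchEdge_right {a j : ℕ} (hj : j ∈ B) (hja : eta j < lam a)
    (e : buchEdge G (a, 0, lam a) (0, j, eta j)) :
    IsLeast {l | l ∈ B ∧ eta l < lam a} j := by
  refine ⟨⟨hj, hja⟩, fun l ⟨hl, hla⟩ => ?_⟩
  by_contra! hlj
  exact e (0, l, eta l) (mem_of_mem_right hG hl) (by simp only [ne_eq, Prod.mk.injEq]; omega)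
    (by simp only [ne_eq, Prod.mk.injEq]; omega) (by simp only [dvd3, lcm3]; omega)

lemma eta_lt_lam_of_isFace {a b j : ℕ} (ha : a ∈ A) (hab : a < b)
    (h : IsFace G (a, 0, lam a) (b, 0, lam b) (0, j, eta j)) : eta j < lam a := by
  by_contra! hja
  exact h.edge₂₃ (a, 0, lam a) (mem_of_mem_left hG ha)
    (by simp only [ne_eq, Prod.mk.injEq]; omega) h.ne₁₃ (by simp only [dvd3, lcm3]; omega)

lemma isCorner_of_isFace_of_lt (hlam : StrictAntiOn lam A) {a b j : ℕ} (ha : a ∈ A)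
    (hb : b ∈ A) (hj : j ∈ B) (hab : a < b)
    (h : IsFace G (a, 0, lam a) (b, 0, lam b) (0, j, eta j)) :
    IsCorner A B lam eta (lcm3 (a, 0, lam a) (lcm3 (b, 0, lam b) (0, j, eta j))) := by
  have hja := eta_lt_lam_of_isFace hG ha hab h
  have hL : lcm3 (a, 0, lam a) (lcm3 (b, 0, lam b) (0, j, eta j)) = (b, j, lam a) := by
    have := hlam ha hb hab
    simp only [lcm3, Prod.mk.injEq]
    omega
  rw [hL]
  exact ⟨isLeast_of_buchEdge_left hG hlam ha hb hab h.edge₁₂,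
    isLeast_of_buchEdge_right hG hj hja h.edge₁₃⟩

lemma isCorner_of_isFace_left (hlam : StrictAntiOn lam A) {a b : ℕ} {w : ℕ × ℕ × ℕ}
    (ha : a ∈ A) (hb : b ∈ A) (h : IsFace G (a, 0, lam a) (b, 0, lam b) w) :
    IsCorner A B lam eta (lcm3 (a, 0, lam a) (lcm3 (b, 0, lam b) w)) := by
  wlog hab : a < b generalizing a b
  · have hba : b < a := lt_of_le_of_ne (not_lt.1 hab) fun e => h.ne₁₂ (by rw [e])
    rw [lcm3_left_comm]
    exact this hb ha h.swap₁₂ hba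
  rcases eq_or_eq_of_mem hG h.mem₃ with ⟨c, hc, rfl⟩ | ⟨j, hj, rfl⟩
  · exact (not_isFace_of_lt hG hlam ha hb hc hab h).elim
  · exact isCorner_of_isFace_of_lt hG hlam ha hb hj hab h

lemma isCorner_of_isFace_right (heta : StrictAntiOn eta B) {a b : ℕ} {w : ℕ × ℕ × ℕ}
    (ha : a ∈ B) (hb : b ∈ B) (h : IsFace G (0, a, eta a) (0, b, eta b) w) :
    IsCorner A B lam eta (lcm3 (0, a, eta a) (lcm3 (0, b, eta b) w)) :=
  isCorner_swap3_iff.1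
    (isCorner_of_isFace_left (preimage_swap3_eq hG) heta ha hb h.preimage_swap3)

theorem isCorner_of_isFace (hlam : StrictAntiOn lam A) (heta : StrictAntiOn eta B)
    {u v w : ℕ × ℕ × ℕ} (h : IsFace G u v w) : IsCorner A B lam eta (lcm3 u (lcm3 v w)) := by
  rcases eq_or_eq_of_mem hG h.mem₁ with ⟨a, ha, rfl⟩ | ⟨a, ha, rfl⟩ <;>
    rcases eq_or_eq_of_mem hG h.mem₂ with ⟨b, hb, rfl⟩ | ⟨b, hb, rfl⟩
  · exact isCorner_of_isFace_left hG hlam ha hb h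
  · rcases eq_or_eq_of_mem hG h.mem₃ with ⟨c, hc, rfl⟩ | ⟨c, hc, rfl⟩
    · rw [lcm3_comm (0, b, eta b)]
      exact isCorner_of_isFace_left hG hlam ha hc h.swap₂₃
    · rw [lcm3_left_comm, lcm3_comm (a, 0, lam a)]
      exact isCorner_of_isFace_right hG heta hb hc h.swap₁₂.swap₂₃
  · rcases eq_or_eq_of_mem hG h.mem₃ with ⟨c, hc, rfl⟩ | ⟨c, hc, rfl⟩
    · rw [lcm3_left_comm, lcm3_comm (0, a, eta a)]
      exact isCorner_of_isFace_left hG hlam hb hc h.swap₁₂.swap₂₃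
    · rw [lcm3_comm (b, 0, lam b)]
      exact isCorner_of_isFace_right hG heta ha hc h.swap₂₃
  · exact isCorner_of_isFace_right hG heta ha hb h

end

end BuchbergerGraph

open BuchbergerGraph in
theorem stmt_16_general (A B : Set ℕ) (lam eta : ℕ → ℕ)
    (hlam : StrictAntiOn lam A) (heta : StrictAntiOn eta B)
    (G : Set (ℕ × ℕ × ℕ))
    (hG : G = {g | ∃ i ∈ A, g = (i, 0, lam i)} ∪ {g | ∃ j ∈ B, g = (0, j, eta j)})
    (u₁ u₂ u₃ v₁ v₂ v₃ : ℕ × ℕ × ℕ)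
    (hu₁ : u₁ ∈ G) (hu₂ : u₂ ∈ G) (hu₃ : u₃ ∈ G)
    (hv₁ : v₁ ∈ G) (hv₂ : v₂ ∈ G) (hv₃ : v₃ ∈ G)
    (hu : u₁ ≠ u₂ ∧ u₁ ≠ u₃ ∧ u₂ ≠ u₃) (hv : v₁ ≠ v₂ ∧ v₁ ≠ v₃ ∧ v₂ ≠ v₃)
    (hue : buchEdge G u₁ u₂ ∧ buchEdge G u₁ u₃ ∧ buchEdge G u₂ u₃)
    (hve : buchEdge G v₁ v₂ ∧ buchEdge G v₁ v₃ ∧ buchEdge G v₂ v₃)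
    (hz : (lcm3 u₁ (lcm3 u₂ u₃)).2.2 = (lcm3 v₁ (lcm3 v₂ v₃)).2.2) :
    lcm3 u₁ (lcm3 u₂ u₃) = lcm3 v₁ (lcm3 v₂ v₃) := by
  have hU : IsFace G u₁ u₂ u₃ :=
    ⟨hu₁, hu₂, hu₃, hu.1, hu.2.1, hu.2.2, hue.1, hue.2.1, hue.2.2⟩
  have hV : IsFace G v₁ v₂ v₃ :=
    ⟨hv₁, hv₂, hv₃, hv.1, hv.2.1, hv.2.2, hve.1, hve.2.1, hve.2.2⟩
  exact (isCorner_of_isFace hG hlam heta hU).unique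
    (isCorner_of_isFace hG hlam heta hV) hz

/-- Lemma 7 of the paper.  Let `I ⊆ ℝ[x,y,z]` be a monomial ideal minimally generated by
monomials `x^i z^{λ_i}` (`i ∈ A`) and `y^j z^{η_j}` (`j ∈ B`), with `λ` and `η` strictly
decreasing on `A` and `B` respectively (minimality: no generator divides another).  The
generators of the third syzygy of `I` correspond to the bounded faces of the (planar)
Buchberger graph, i.e. to triples of distinct generators which are pairwise Buchberger
edges, labeled by the lcm of the triple.  Then no two generators of the third syzygy have
the same `z`-degree: if the lcms of two such triples have equal `z`-exponent, the lcms
coincide. -/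
theorem stmt_16 (A B : Set ℕ) (lam eta : ℕ → ℕ)
    (hlam : StrictAntiOn lam A) (heta : StrictAntiOn eta B)
    (G : Set (ℕ × ℕ × ℕ))
    (hG : G = {g | ∃ i ∈ A, g = (i, 0, lam i)} ∪ {g | ∃ j ∈ B, g = (0, j, eta j)})
    (hmin : ∀ u ∈ G, ∀ v ∈ G, u ≠ v → ¬ dvd3 u v)
    (u₁ u₂ u₃ v₁ v₂ v₃ : ℕ × ℕ × ℕ)
    (hu₁ : u₁ ∈ G) (hu₂ : u₂ ∈ G) (hu₃ : u₃ ∈ G)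
    (hv₁ : v₁ ∈ G) (hv₂ : v₂ ∈ G) (hv₃ : v₃ ∈ G)
    (hu : u₁ ≠ u₂ ∧ u₁ ≠ u₃ ∧ u₂ ≠ u₃) (hv : v₁ ≠ v₂ ∧ v₁ ≠ v₃ ∧ v₂ ≠ v₃)
    (hue : buchEdge G u₁ u₂ ∧ buchEdge G u₁ u₃ ∧ buchEdge G u₂ u₃)
    (hve : buchEdge G v₁ v₂ ∧ buchEdge G v₁ v₃ ∧ buchEdge G v₂ v₃)
    (hz : (lcm3 u₁ (lcm3 u₂ u₃)).2.2 = (lcm3 v₁ (lcm3 v₂ v₃)).2.2) :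
    lcm3 u₁ (lcm3 u₂ u₃) = lcm3 v₁ (lcm3 v₂ v₃) :=
  stmt_16_general A B lam eta hlam heta G hG u₁ u₂ u₃ v₁ v₂ v₃ hu₁ hu₂ hu₃ hv₁ hv₂ hv₃ hu hv hue hve
    hz
end

section
/- Let p ≥ 1 and let Q = ⟨x^p, x^{p-1}z, x^{p-2}z³, …, x z^{2p-3}, z^{2p-1}⟩ + ⟨y^p, y^{p-1}z, y^{p-2}z³, …, y z^{2p-3}⟩ in S = ℝ[x,y,z]. Then the largest d such that (S/Q)_d ≠ 0 is 2p − 2. -/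
open MvPolynomial

private lemma deg3 (m : Fin 3 →₀ ℕ) : m.degree = m 0 + m 1 + m 2 := by
  rw [Finsupp.degree_apply, Finset.sum_subset (Finset.subset_univ m.support)
    (fun i _ hi => Finsupp.notMem_support_iff.mp hi), Fin.sum_univ_three]

private lemma le3 {k l : ℕ} {m : Fin 3 →₀ ℕ} {j : Fin 3} (hj : j ≠ 2)
    (hk : k ≤ m j) (hl : l ≤ m 2) :
    Finsupp.single j k + Finsupp.single 2 l ≤ m := by
  rw [Finsupp.le_def]
  intro s
  rw [Finsupp.add_apply, Finsupp.single_apply, Finsupp.single_apply]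
  split_ifs with h1 h2 h2
  · exact absurd (h1.trans h2.symm) hj
  · subst h1; simpa using hk
  · subst h2; simpa using hl
  · simp

private lemma app2 {j : Fin 3} (hj : j ≠ 2) (k l : ℕ) :
    (Finsupp.single j k + Finsupp.single 2 l : Fin 3 →₀ ℕ) 2 = l := by
  rw [Finsupp.add_apply, Finsupp.single_eq_of_ne' hj, Finsupp.single_eq_same, zero_add]

private lemma appj {j : Fin 3} (hj : j ≠ 2) (k l : ℕ) :
    (Finsupp.single j k + Finsupp.single 2 l : Fin 3 →₀ ℕ) j = k := by
  rw [Finsupp.add_apply, Finsupp.single_eq_same, Finsupp.single_eq_of_ne' (Ne.symm hj), add_zero]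

private lemma evalm (a b : ℕ) (s : Fin 3) :
    (Finsupp.single (0 : Fin 3) a + Finsupp.single 1 b : Fin 3 →₀ ℕ) s
      = if s = 0 then a else if s = 1 then b else 0 := by
  rw [Finsupp.add_apply, Finsupp.single_apply, Finsupp.single_apply]
  fin_cases s <;> simp

/-- Let `p ≥ 1` and `Q = ⟨x^p, x^{p-1}z, x^{p-2}z³, …, xz^{2p-3}, z^{2p-1}⟩ + ⟨y^p,
y^{p-1}z, y^{p-2}z³, …, yz^{2p-3}⟩` in `S = ℝ[x,y,z]` (with `x = X 0`, `y = X 1`,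
`z = X 2`; the `z`-exponents are `max(0, 2i-1)` against `x`- or `y`-exponent `p - i`).
Then the largest `d` such that `(S/Q)_d ≠ 0` is `2p - 2`. -/
theorem stmt_17 (p : ℕ) (hp : 1 ≤ p) (Q : Ideal (MvPolynomial (Fin 3) ℝ))
    (hQ : Q = Ideal.span
      ({q | ∃ i ≤ p, q = X 0 ^ (p - i) * X 2 ^ (2 * i - 1)} ∪
       {q | ∃ i ≤ p - 1, q = X 1 ^ (p - i) * X 2 ^ (2 * i - 1)})) :
    IsGreatest {d : ℕ | ∃ f : MvPolynomial (Fin 3) ℝ, f.IsHomogeneous d ∧ f ∉ Q}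
      (2 * p - 2) := by
  have hmon : ∀ (j : Fin 3) (a c : ℕ), (X j : MvPolynomial (Fin 3) ℝ) ^ a * X 2 ^ c
      = monomial (Finsupp.single j a + Finsupp.single 2 c) 1 := by
    intro j a c
    rw [X_pow_eq_monomial, X_pow_eq_monomial, monomial_mul, one_mul]
  set E : Set (Fin 3 →₀ ℕ) :=
    {e | ∃ i ≤ p, e = Finsupp.single 0 (p - i) + Finsupp.single 2 (2 * i - 1)} ∪
    {e | ∃ i ≤ p - 1, e = Finsupp.single 1 (p - i) + Finsupp.single 2 (2 * i - 1)} with hE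
  have key : Q = Ideal.span ((fun e => monomial e (1 : ℝ)) '' E) := by
    rw [hQ]
    congr 1
    ext q
    constructor
    · rintro (⟨i, hi, rfl⟩ | ⟨i, hi, rfl⟩)
      · exact ⟨_, Or.inl ⟨i, hi, rfl⟩, (hmon 0 _ _).symm⟩
      · exact ⟨_, Or.inr ⟨i, hi, rfl⟩, (hmon 1 _ _).symm⟩
    · rintro ⟨e, (⟨i, hi, rfl⟩ | ⟨i, hi, rfl⟩), rfl⟩
      · exact Or.inl ⟨i, hi, (hmon 0 _ _).symm⟩
      · exact Or.inr ⟨i, hi, (hmon 1 _ _).symm⟩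
  constructor
  · -- 2p-2 is attained by x^{p-1} y^{p-1}
    refine ⟨monomial (Finsupp.single 0 (p - 1) + Finsupp.single 1 (p - 1)) 1, ?_, ?_⟩
    · apply isHomogeneous_monomial
      rw [deg3, evalm, evalm, evalm]
      norm_num [Fin.ext_iff]
      omega
    · rw [key]
      intro hmem
      obtain ⟨e, he, hle⟩ := mem_ideal_span_monomial_image.mp hmem
        (Finsupp.single 0 (p - 1) + Finsupp.single 1 (p - 1)) (by
          rw [support_monomial, if_neg one_ne_zero]; exact Finset.mem_singleton_self _)
      rcases he with ⟨i, hi, rfl⟩ | ⟨i, hi, rfl⟩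
      · have h2 := (Finsupp.le_def.mp hle) 2
        have h0 := (Finsupp.le_def.mp hle) 0
        rw [app2 (by decide)] at h2
        rw [appj (by decide)] at h0
        rw [evalm] at h0 h2
        norm_num [Fin.ext_iff] at h0 h2
        omega
      · have h2 := (Finsupp.le_def.mp hle) 2
        have h1 := (Finsupp.le_def.mp hle) 1
        rw [app2 (by decide)] at h2
        rw [appj (by decide)] at h1
        rw [evalm] at h1 h2
        norm_num [Fin.ext_iff] at h1 h2
        omega
  · -- upper bound
    rintro d ⟨f, hf, hfQ⟩
    by_contra hd
    apply hfQ
    rw [key]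
    apply mem_ideal_span_monomial_image.mpr
    intro m hm
    have hdeg : m 0 + m 1 + m 2 = d := by
      have := hf (mem_support_iff.mp hm)
      change (Finsupp.weight (fun _ => 1)) m = d at this
      rw [← Finsupp.degree_eq_weight_one, deg3] at this
      exact this
    have hd' : 2 * p - 1 ≤ d := by omega
    rcases le_or_gt p (m 0) with h0 | h0
    · exact ⟨_, Or.inl ⟨0, Nat.zero_le _, rfl⟩,
        le3 (by decide) (by simpa using h0) (by simp)⟩
    rcases le_or_gt p (m 1) with h1 | h1
    · exact ⟨_, Or.inr ⟨0, Nat.zero_le _, rfl⟩,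
        le3 (by decide) (by simpa using h1) (by simp)⟩
    rcases le_or_gt (m 1) (m 0) with hab | hab
    · exact ⟨_, Or.inl ⟨p - m 0, by omega, rfl⟩,
        le3 (by decide) (by omega) (by omega)⟩
    · exact ⟨_, Or.inr ⟨p - m 1, by omega, rfl⟩,
        le3 (by decide) (by omega) (by omega)⟩
end

section
/- Let J' = ⟨(x+α₀z)^{r+1}, …, (x+α_{a-2}z)^{r+1}⟩ ⊆ ℝ[x,z] ⊆ ℝ[x,y,z] with α₀,…,α_{a-2} distinct reals and a ≥ 3, and let J(ε) = ⟨z^{r+1}⟩. Then with respect to the lex order x > y > z, In(J' : J(ε)) = In(J') : J(ε). -/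
open MvPolynomial

/-- The initial ideal of an ideal of `ℝ[x,y,z]` with respect to the lex order `x > y > z`:
the ideal generated by the leading monomials of its nonzero elements. -/
noncomputable def initialIdeal (I : Ideal (MvPolynomial (Fin 3) ℝ)) :
    Ideal (MvPolynomial (Fin 3) ℝ) :=
  Ideal.span {q | ∃ p ∈ I, p ≠ 0 ∧ q = monomial (leadMon p) (1 : ℝ)}

namespace StmtAux

lemma leadMon_mem_support {p : MvPolynomial (Fin 3) ℝ} (hp : p ≠ 0) :
    leadMon p ∈ p.support := by
  unfold leadMon
  rw [dif_neg hp]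
  obtain ⟨ν, hν, h⟩ := Finset.mem_image.mp
    (Finset.max'_mem (p.support.image (toLex : (Fin 3 →₀ ℕ) → Lex (Fin 3 →₀ ℕ))) _)
  rw [← h]
  exact hν

lemma coeff_leadMon_ne_zero {p : MvPolynomial (Fin 3) ℝ} (hp : p ≠ 0) :
    coeff (leadMon p) p ≠ 0 :=
  mem_support_iff.mp (leadMon_mem_support hp)

lemma toLex_le_leadMon {p : MvPolynomial (Fin 3) ℝ} (hp : p ≠ 0) {ν : Fin 3 →₀ ℕ}
    (hν : ν ∈ p.support) : toLex ν ≤ toLex (leadMon p) := by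
  unfold leadMon
  rw [dif_neg hp, toLex_ofLex]
  exact Finset.le_max' _ _ (Finset.mem_image_of_mem _ hν)

lemma leadMon_eq {p : MvPolynomial (Fin 3) ℝ} {μ : Fin 3 →₀ ℕ} (h1 : μ ∈ p.support)
    (h2 : ∀ ν ∈ p.support, toLex ν ≤ toLex μ) : leadMon p = μ := by
  have hp : p ≠ 0 := by
    intro h
    rw [h] at h1
    simp at h1
  exact toLex.injective (le_antisymm (h2 _ (leadMon_mem_support hp)) (toLex_le_leadMon hp h1))

lemma mul_monomial_ne_zero {p : MvPolynomial (Fin 3) ℝ} (hp : p ≠ 0) (s : Fin 3 →₀ ℕ) :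
    p * monomial s (1 : ℝ) ≠ 0 := by
  intro h
  have h1 := coeff_mul_monomial (leadMon p) s (1 : ℝ) p
  rw [h, mul_one, coeff_zero] at h1
  exact coeff_leadMon_ne_zero hp h1.symm

lemma leadMon_mul_monomial {p : MvPolynomial (Fin 3) ℝ} (hp : p ≠ 0) (s : Fin 3 →₀ ℕ) :
    leadMon (p * monomial s (1 : ℝ)) = leadMon p + s := by
  apply leadMon_eq
  · rw [mem_support_iff, coeff_mul_monomial, mul_one]
    exact coeff_leadMon_ne_zero hp
  · intro ν hν
    rw [mem_support_iff, coeff_mul_monomial'] at hν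
    split_ifs at hν with hs
    · rw [mul_one] at hν
      have h1 : toLex (ν - s) ≤ toLex (leadMon p) := toLex_le_leadMon hp (mem_support_iff.mpr hν)
      have h2 : toLex (ν - s) + toLex s ≤ toLex (leadMon p) + toLex s := add_le_add_left h1 _
      rw [← toLex_add, ← toLex_add, tsub_add_cancel_of_le hs] at h2
      exact h2
    · simp at hν

/-- weights recording ((x,z)-degree, y-degree) -/
def w3 : Fin 3 → ℕ × ℕ := ![(1, 0), (0, 1), (1, 0)]

lemma weight_w3 (ν : Fin 3 →₀ ℕ) : Finsupp.weight w3 ν = (ν 0 + ν 2, ν 1) := by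
  rw [Finsupp.weight_apply, Finsupp.sum_fintype]
  · rw [Fin.sum_univ_three]
    simp [w3, Prod.ext_iff]
  · intro i
    exact zero_smul ℕ _

lemma isWH_gen (c : ℝ) (n : ℕ) :
    IsWeightedHomogeneous w3 ((X 0 + C c * X 2 : MvPolynomial (Fin 3) ℝ) ^ n) (n, 0) := by
  have h0 : IsWeightedHomogeneous w3 (X 0 : MvPolynomial (Fin 3) ℝ) (1, 0) := by
    have := isWeightedHomogeneous_X ℝ w3 (0 : Fin 3)
    simpa [w3] using this
  have hx2 : IsWeightedHomogeneous w3 (X 2 : MvPolynomial (Fin 3) ℝ) (1, 0) := by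
    have := isWeightedHomogeneous_X ℝ w3 (2 : Fin 3)
    simpa [w3] using this
  have h2 : IsWeightedHomogeneous w3 (C c * X 2 : MvPolynomial (Fin 3) ℝ) (1, 0) := by
    rw [C_mul']
    intro d hd
    rw [coeff_smul] at hd
    apply hx2
    intro h
    rw [h, smul_zero] at hd
    exact hd rfl
  have hsum : IsWeightedHomogeneous w3 (X 0 + C c * X 2 : MvPolynomial (Fin 3) ℝ) (1, 0) :=
    h0.add h2
  induction n with
  | zero =>
      rw [pow_zero]
      have := isWeightedHomogeneous_one ℝ w3
      exact this
  | succ k ih =>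
      rw [pow_succ]
      have := ih.mul hsum
      simpa [Prod.ext_iff] using this

lemma whc_mul_isWH (D : ℕ × ℕ) {G : MvPolynomial (Fin 3) ℝ} {n : ℕ × ℕ}
    (hG : IsWeightedHomogeneous w3 G n) (c : MvPolynomial (Fin 3) ℝ) :
    (∃ E, weightedHomogeneousComponent w3 D (c * G) =
        weightedHomogeneousComponent w3 E c * G) ∨
      weightedHomogeneousComponent w3 D (c * G) = 0 := by
  classical
  by_cases hE : ∃ E : ℕ × ℕ, E + n = D
  · obtain ⟨E, hEn⟩ := hE
    left
    refine ⟨E, ?_⟩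
    ext ν
    rw [coeff_weightedHomogeneousComponent, coeff_mul, coeff_mul]
    split_ifs with h
    · apply Finset.sum_congr rfl
      rintro ⟨u, v⟩ huv
      by_cases hv : coeff v G = 0
      · simp [hv]
      · have hwv : Finsupp.weight w3 v = n := hG hv
        have huν : u + v = ν := Finset.HasAntidiagonal.mem_antidiagonal.mp huv
        have hu : Finsupp.weight w3 u = E := by
          have hh : Finsupp.weight w3 u + n = E + n := by
            rw [hEn, ← h, ← huν, map_add, hwv]
          exact add_right_cancel hh
        rw [coeff_weightedHomogeneousComponent, if_pos hu]
    · symm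
      apply Finset.sum_eq_zero
      rintro ⟨u, v⟩ huv
      by_cases hv : coeff v G = 0
      · simp [hv]
      rw [coeff_weightedHomogeneousComponent]
      split_ifs with hu
      · exfalso
        apply h
        rw [← Finset.HasAntidiagonal.mem_antidiagonal.mp huv, map_add, hu, hG hv, hEn]
      · exact zero_mul _
  · right
    ext ν
    rw [coeff_weightedHomogeneousComponent, coeff_zero]
    split_ifs with h
    · rw [coeff_mul]
      apply Finset.sum_eq_zero
      rintro ⟨u, v⟩ huv
      by_cases hv : coeff v G = 0
      · simp [hv]
      by_cases hu : coeff u c = 0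
      · simp [hu]
      exfalso
      exact hE ⟨Finsupp.weight w3 u, by
        rw [← hG hv, ← map_add, Finset.HasAntidiagonal.mem_antidiagonal.mp huv, h]⟩
    · rfl

lemma slice_mem {k : ℕ} (g : Fin k → MvPolynomial (Fin 3) ℝ) (n : ℕ × ℕ)
    (hg : ∀ i, IsWeightedHomogeneous w3 (g i) n)
    {p : MvPolynomial (Fin 3) ℝ} (hp : p ∈ Ideal.span (Set.range g)) (D : ℕ × ℕ) :
    weightedHomogeneousComponent w3 D p ∈ Ideal.span (Set.range g) := by
  obtain ⟨c, hc⟩ := (Submodule.mem_span_range_iff_exists_fun (MvPolynomial (Fin 3) ℝ)).mp hp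
  rw [← hc, map_sum]
  apply Ideal.sum_mem
  intro i _
  rw [smul_eq_mul]
  rcases whc_mul_isWH D (hg i) (c i) with ⟨E, hEq⟩ | h0
  · rw [hEq]
    exact Ideal.mul_mem_left _ _ (Ideal.subset_span ⟨i, rfl⟩)
  · rw [h0]
    exact Ideal.zero_mem _

lemma z_component_le {μ ν : Fin 3 →₀ ℕ} (h02 : ν 0 + ν 2 = μ 0 + μ 2) (h1 : ν 1 = μ 1)
    (hle : toLex ν ≤ toLex μ) : μ 2 ≤ ν 2 := by
  rcases eq_or_lt_of_le hle with heq | hlt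
  · have : ν = μ := toLex.injective heq
    rw [this]
  · obtain ⟨j, hj, hjlt⟩ := Finsupp.lex_def.mp hlt
    simp only [ofLex_toLex] at hj hjlt
    have hjv := j.is_lt
    have hcase : (j : ℕ) = 0 ∨ (j : ℕ) = 1 ∨ (j : ℕ) = 2 := by omega
    rcases hcase with h | h | h
    · have hj0 : j = 0 := Fin.ext h
      subst hj0
      omega
    · have hj1 : j = 1 := Fin.ext h
      subst hj1
      omega
    · have hj2 : j = 2 := Fin.ext h
      subst hj2
      have h0 := hj 0 (by decide)
      omega

lemma exists_div {Q : MvPolynomial (Fin 3) ℝ} (c : ℕ) (h : ∀ ν ∈ Q.support, c ≤ ν 2) :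
    ∃ q : MvPolynomial (Fin 3) ℝ, q * monomial (Finsupp.single 2 c) (1 : ℝ) = Q := by
  refine ⟨∑ ν ∈ Q.support, monomial (ν - Finsupp.single 2 c) (coeff ν Q), ?_⟩
  rw [Finset.sum_mul]
  conv_rhs => rw [Q.as_sum]
  apply Finset.sum_congr rfl
  intro ν hν
  rw [monomial_mul, mul_one, tsub_add_cancel_of_le (Finsupp.single_le_iff.mpr (h ν hν))]

lemma core (r : ℕ) {k : ℕ} (g : Fin k → MvPolynomial (Fin 3) ℝ)
    (hg : ∀ i, IsWeightedHomogeneous w3 (g i) (r + 1, 0))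
    {p : MvPolynomial (Fin 3) ℝ} (hpJ : p ∈ Ideal.span (Set.range g)) (hp0 : p ≠ 0)
    {m : Fin 3 →₀ ℕ} (hle : leadMon p ≤ m + Finsupp.single 2 (r + 1)) :
    ∃ q : MvPolynomial (Fin 3) ℝ, q ≠ 0 ∧ q * X 2 ^ (r + 1) ∈ Ideal.span (Set.range g) ∧
      leadMon q ≤ m := by
  classical
  set μ := leadMon p with hμ
  set c := min (μ 2) (r + 1) with hc
  set Q := weightedHomogeneousComponent w3 (Finsupp.weight w3 μ) p with hQ
  have hcoeffQ : ∀ ν, coeff ν Q =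
      if Finsupp.weight w3 ν = Finsupp.weight w3 μ then coeff ν p else 0 := by
    intro ν
    rw [hQ, coeff_weightedHomogeneousComponent]
  have hμmem : μ ∈ Q.support := by
    rw [mem_support_iff, hcoeffQ, if_pos rfl]
    exact coeff_leadMon_ne_zero hp0
  have hQ0 : Q ≠ 0 := by
    intro h
    rw [h] at hμmem
    simp at hμmem
  have hsub : Q.support ⊆ p.support := by
    intro ν hν
    rw [mem_support_iff, hcoeffQ] at hν
    split_ifs at hν with h
    · exact mem_support_iff.mpr hν
    · simp at hν
  have hleadQ : leadMon Q = μ :=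
    leadMon_eq hμmem fun ν hν => toLex_le_leadMon hp0 (hsub hν)
  have hzdvd : ∀ ν ∈ Q.support, c ≤ ν 2 := by
    intro ν hν
    have hw : Finsupp.weight w3 ν = Finsupp.weight w3 μ := by
      by_contra h
      rw [mem_support_iff, hcoeffQ, if_neg h] at hν
      exact hν rfl
    rw [weight_w3, weight_w3, Prod.ext_iff] at hw
    have hlex := toLex_le_leadMon hp0 (hsub hν)
    have := z_component_le hw.1 hw.2 hlex
    omega
  obtain ⟨q, hq⟩ := exists_div c hzdvd
  have hq0 : q ≠ 0 := by
    rintro rfl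
    rw [zero_mul] at hq
    exact hQ0 hq.symm
  have hqlead : leadMon q + Finsupp.single 2 c = μ := by
    rw [← hleadQ, ← hq, leadMon_mul_monomial hq0]
  have hQJ : Q ∈ Ideal.span (Set.range g) := slice_mem g (r + 1, 0) hg hpJ _
  refine ⟨q, hq0, ?_, ?_⟩
  · rw [X_pow_eq_monomial]
    have hsplit : Finsupp.single (2 : Fin 3) (r + 1) =
        Finsupp.single 2 c + Finsupp.single 2 (r + 1 - c) := by
      rw [← Finsupp.single_add]
      congr 1
      omega
    have hmm : q * monomial (Finsupp.single (2 : Fin 3) (r + 1)) (1 : ℝ) =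
        Q * monomial (Finsupp.single 2 (r + 1 - c)) (1 : ℝ) := by
      rw [hsplit, ← hq]
      rw [mul_assoc, monomial_mul, mul_one]
    rw [hmm]
    exact Ideal.mul_mem_right _ _ hQJ
  · have hμle := Finsupp.le_def.mp hle
    have hq2 : ∀ i, leadMon q i + Finsupp.single (2 : Fin 3) c i = μ i := by
      intro i
      rw [← hqlead, Finsupp.add_apply]
    rw [Finsupp.le_def]
    intro i
    have h1 := hq2 i
    have h2 := hμle i
    rw [Finsupp.add_apply] at h2
    by_cases hi : i = 2
    · subst hi
      rw [Finsupp.single_eq_same] at h1 h2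
      omega
    · rw [Finsupp.single_eq_of_ne' fun hh => hi hh.symm] at h1 h2
      omega

end StmtAux

open StmtAux in
/-- For `J' = ⟨(x+α₀z)^{r+1}, …, (x+α_{a-2}z)^{r+1}⟩` with distinct reals `α₀,…,α_{a-2}`,
`a ≥ 3`, and `J(ε) = ⟨z^{r+1}⟩` in `ℝ[x,y,z]`, with respect to the lex order `x > y > z`
one has `In(J' : J(ε)) = In(J') : J(ε)`. -/
theorem stmt_18 (a r : ℕ) (ha : 3 ≤ a) (α : Fin (a - 1) → ℝ) (hα : Function.Injective α)
    (J' Jε : Ideal (MvPolynomial (Fin 3) ℝ))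
    (hJ' : J' = Ideal.span (Set.range fun i : Fin (a - 1) => (X 0 + C (α i) * X 2) ^ (r + 1)))
    (hJε : Jε = Ideal.span {X 2 ^ (r + 1)}) :
    initialIdeal (Submodule.colon J' Jε) = Submodule.colon (initialIdeal J') Jε := by
  subst hJε
  set g : Fin (a - 1) → MvPolynomial (Fin 3) ℝ :=
    fun i => (X 0 + C (α i) * X 2) ^ (r + 1) with hg_def
  have hg : ∀ i, IsWeightedHomogeneous w3 (g i) (r + 1, 0) := fun i => isWH_gen (α i) (r + 1)
  apply le_antisymm
  · rw [initialIdeal]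
    apply Ideal.span_le.mpr
    rintro q ⟨p, hpc, hp0, rfl⟩
    have hpz : p * X 2 ^ (r + 1) ∈ J' := Ideal.mem_colon_span_singleton.mp hpc
    rw [SetLike.mem_coe, Ideal.mem_colon_span_singleton]
    have hrw : monomial (leadMon p) (1 : ℝ) * X 2 ^ (r + 1) =
        monomial (leadMon (p * X 2 ^ (r + 1))) (1 : ℝ) := by
      rw [X_pow_eq_monomial, monomial_mul, mul_one, leadMon_mul_monomial hp0]
    have hne : p * X 2 ^ (r + 1) ≠ 0 := by
      rw [X_pow_eq_monomial]
      exact mul_monomial_ne_zero hp0 _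
    rw [hrw]
    exact Ideal.subset_span ⟨p * X 2 ^ (r + 1), hpz, hne, rfl⟩
  · intro f hf
    have hfz : f * X 2 ^ (r + 1) ∈ initialIdeal J' := Ideal.mem_colon_span_singleton.mp hf
    have himg : {q | ∃ p ∈ J', p ≠ 0 ∧ q = monomial (leadMon p) (1 : ℝ)} =
        (fun s => monomial s (1 : ℝ)) '' {s | ∃ p ∈ J', p ≠ 0 ∧ leadMon p = s} := by
      ext q
      constructor
      · rintro ⟨p, h1, h2, rfl⟩
        exact ⟨leadMon p, ⟨p, h1, h2, rfl⟩, rfl⟩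
      · rintro ⟨s, ⟨p, h1, h2, rfl⟩, rfl⟩
        exact ⟨p, h1, h2, rfl⟩
    rw [initialIdeal, himg, mem_ideal_span_monomial_image] at hfz
    nth_rewrite 1 [f.as_sum]
    apply Ideal.sum_mem
    intro m hm
    have hmem : m + Finsupp.single 2 (r + 1) ∈ (f * X 2 ^ (r + 1)).support := by
      rw [X_pow_eq_monomial, mem_support_iff, coeff_mul_monomial, mul_one]
      exact mem_support_iff.mp hm
    obtain ⟨s, ⟨p, hpJ, hp0, hps⟩, hsle⟩ := hfz _ hmem
    rw [← hps] at hsle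
    rw [hJ'] at hpJ
    obtain ⟨q, hq0, hqz, hqle⟩ := core r g hg hpJ hp0 hsle
    have hqc : q ∈ Submodule.colon J' ((Ideal.span {X 2 ^ (r + 1)} : Ideal (MvPolynomial (Fin 3) ℝ)) : Set (MvPolynomial (Fin 3) ℝ)) :=
      Ideal.mem_colon_span_singleton.mpr (by rw [hJ']; exact hqz)
    have hmono : monomial m (coeff m f) =
        monomial (m - leadMon q) (coeff m f) * monomial (leadMon q) (1 : ℝ) := by
      rw [monomial_mul, mul_one, tsub_add_cancel_of_le hqle]
    rw [hmono]
    exact Ideal.mul_mem_left _ _ (Ideal.subset_span ⟨q, hqc, hq0, rfl⟩)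
end
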